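/- arXiv:1701.01387 — 6 statements merged into one kernel-verified Lean document; each statement's English description precedes it below -/
import Mathlib

section
/- Let A ⊆ ℤ⁺ be infinite and geometrically sparse, with strictly increasing enumeration (a_n)_{n=0}^∞. Fix integers k, l ≥ 1 and r ∈ ℤ. Then there are s, t* ≥ 0 such that for every t ≥ 0 there is t' ≥ 0 (depending on k, l, r, t) with the following property: for any (m̄,n̄) ∈ A(k,l,r), if max(m̄) − min(m̄) ≤ t, then either (m̄,n̄) ∈ A(k,l,r,s) or max(m̄,n̄) − min(m̄,n̄) ≤ t', where max(m̄,n̄) and min(m̄,n̄) are the maximum and minimum over all coordinates of both tuples. -/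
set_option maxHeartbeats 2000000


open Filter Pointwise

/-- The `k`-fold sumset `X + ⋯ + X` (`k` times) of a set of integers. -/
def kFold (X : Set ℤ) (k : ℕ) : Set ℤ :=
  {z : ℤ | ∃ f : Fin k → ℤ, (∀ i, f i ∈ X) ∧ z = ∑ i, f i}

/-- `Σ_n(X) = ⋃_{k=1}^n k(X)`. -/
def sigmaSum (n : ℕ) (X : Set ℤ) : Set ℤ :=
  ⋃ k ∈ Finset.Icc 1 n, kFold X k

/-- `±A = {x ∈ ℤ : |x| ∈ A}`. -/
def pmSet (A : Set ℤ) : Set ℤ := {x : ℤ | |x| ∈ A}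

/-- The lower asymptotic density of a set of naturals:
`liminf_{n → ∞} |A ∩ {1,…,n}| / n`. -/
noncomputable def lowerDensity (A : Set ℕ) : ℝ :=
  Filter.liminf (fun n : ℕ => (Set.ncard (A ∩ Set.Icc 1 n) : ℝ) / n) Filter.atTop

/-- The set of naturals whose image in `ℤ` lies in `S`. -/
def intSetToNat (S : Set ℤ) : Set ℕ := {n : ℕ | (n : ℤ) ∈ S}

/-- `A ⊆ ℤ` is sufficiently sparse if `δ̲(Σ_n(±A) ∩ ℕ) = 0` for all `n ≥ 1`. -/
def SuffSparse (A : Set ℤ) : Prop :=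
  ∀ n : ℕ, 1 ≤ n → lowerDensity (intSetToNat (sigmaSum n (pmSet A))) = 0

/-- A set `S` of (positive) reals is geometric if `{s/t : s, t ∈ S, t ≤ s}` is a closed
and discrete subset of `ℝ`. -/
def IsGeometric (S : Set ℝ) : Prop :=
  IsClosed {x : ℝ | ∃ s ∈ S, ∃ t ∈ S, t ≤ s ∧ x = s / t} ∧
    DiscreteTopology {x : ℝ | ∃ s ∈ S, ∃ t ∈ S, t ≤ s ∧ x = s / t}

/-- `A ⊆ ℤ` is geometrically sparse if there is `f : A → ℝ⁺` with `f(A)` geometric and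
`sup_{a ∈ A} |a − f(a)| < ∞`. -/
def GeomSparse (A : Set ℤ) : Prop :=
  ∃ f : ℤ → ℝ, (∀ a ∈ A, 0 < f a) ∧ IsGeometric (f '' A) ∧
    ∃ C : ℝ, ∀ a ∈ A, |(a : ℝ) - f a| ≤ C

/-- `(m̄,n̄) ∈ A(k,l,r)`: `r + a_{m_1} + ⋯ + a_{m_k} = a_{n_1} + ⋯ + a_{n_l}`, where
`(a_i)` enumerates `A`. -/
def inRel (a : ℕ → ℤ) {k l : ℕ} (r : ℤ) (m : Fin k → ℕ) (n : Fin l → ℕ) : Prop :=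
  r + ∑ i, a (m i) = ∑ j, a (n j)

/-- `(m̄,n̄) ∈ A(k,l,r,s)`: there are `s'` with `|s'| ≤ s` and proper subsets `I ⊊ [k]`,
`J ⊊ [l]`, not both empty, with `r + s' + Σ_{i∈I} a_{m_i} = Σ_{j∈J} a_{n_j}` and
`Σ_{i∉I} a_{m_i} = s' + Σ_{j∉J} a_{n_j}`. -/
def inRelS (a : ℕ → ℤ) {k l : ℕ} (r s : ℤ) (m : Fin k → ℕ) (n : Fin l → ℕ) : Prop :=
  ∃ s' : ℤ, |s'| ≤ s ∧ ∃ (I : Finset (Fin k)) (J : Finset (Fin l)),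
    I ≠ Finset.univ ∧ J ≠ Finset.univ ∧ (I.Nonempty ∨ J.Nonempty) ∧
    r + s' + ∑ i ∈ I, a (m i) = ∑ j ∈ J, a (n j) ∧
    ∑ i ∈ Iᶜ, a (m i) = s' + ∑ j ∈ Jᶜ, a (n j)

lemma eps_lemma (D : Finset ℝ) (K : ℕ) :
    ∃ ε : ℝ, 0 < ε ∧ ε ≤ 1 ∧ ∀ c : ℝ → ℤ, (∀ δ ∈ D, |c δ| ≤ (K : ℤ)) →
      (∑ δ ∈ D, (c δ : ℝ) * δ) ≠ 0 → ε ≤ |∑ δ ∈ D, (c δ : ℝ) * δ| := by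
  classical
  set F : (D → (Finset.Icc (-(K:ℤ)) K)) → ℝ :=
    fun c => ∑ δ : D, ((c δ : ℤ) : ℝ) * (δ : ℝ) with hF
  have hfin : (Set.range F).Finite := Set.finite_range F
  set G : Finset ℝ := (hfin.toFinset.filter (fun v => v ≠ 0)).image abs with hG
  have key : ∀ c : ℝ → ℤ, (∀ δ ∈ D, |c δ| ≤ (K : ℤ)) →
      (∑ δ ∈ D, (c δ : ℝ) * δ) ∈ Set.range F := by
    intro c hc
    refine ⟨fun δ => ⟨c δ, ?_⟩, ?_⟩
    · rw [Finset.mem_Icc]; have := hc δ δ.2; rw [abs_le] at this; exact this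
    · rw [hF]; simp only
      rw [← Finset.sum_attach D (fun δ => (c δ : ℝ) * δ)]
      rfl
  have habs : ∀ c : ℝ → ℤ, (∀ δ ∈ D, |c δ| ≤ (K : ℤ)) →
      (∑ δ ∈ D, (c δ : ℝ) * δ) ≠ 0 → |∑ δ ∈ D, (c δ : ℝ) * δ| ∈ G := by
    intro c hc hne
    rw [hG]
    exact Finset.mem_image_of_mem _ (Finset.mem_filter.2 ⟨hfin.mem_toFinset.2 (key c hc), hne⟩)
  by_cases hGn : G.Nonempty
  · refine ⟨min (G.min' hGn) 1, ?_, min_le_right _ _, ?_⟩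
    · refine lt_min ?_ one_pos
      obtain ⟨v, hv, hveq⟩ := Finset.mem_image.1 (G.min'_mem hGn)
      rw [Finset.mem_filter] at hv
      exact hveq ▸ abs_pos.2 hv.2
    · intro c hc hne
      exact le_trans (min_le_left _ _) (G.min'_le _ (habs c hc hne))
  · refine ⟨1, one_pos, le_refl _, ?_⟩
    intro c hc hne
    exact absurd ⟨_, habs c hc hne⟩ hGn

lemma ratio_finite {S : Set ℝ} (h1 : IsClosed S) (h2 : DiscreteTopology S) (R : ℝ) :
    (S ∩ Set.Icc 1 R).Finite := by
  have hc : IsCompact (S ∩ Set.Icc 1 R) := (isCompact_Icc).inter_left h1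
  exact hc.finite (isDiscrete_iff_discreteTopology.mpr (DiscreteTopology.of_subset h2 Set.inter_subset_left))

lemma mono_gap {a : ℕ → ℤ} (ha : StrictMono a) :
    ∀ p q : ℕ, p ≤ q → a p + (q - p : ℕ) ≤ a q := by
  intro p q hpq
  obtain ⟨d, rfl⟩ := Nat.exists_eq_add_of_le hpq
  induction d with
  | zero => simp
  | succ d ih =>
    have h1 : a (p + d) + 1 ≤ a (p + (d + 1)) := by
      have := ha (show p + d < p + (d + 1) by omega)
      omega
    have := ih (Nat.le_add_right _ _)
    push_cast at *
    omega

lemma idx_lt {A : Set ℤ} (hApos : ∀ x ∈ A, 0 < x) {a : ℕ → ℤ} (ha : StrictMono a)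
    (hrange : Set.range a = A) : ∀ i : ℕ, (i : ℤ) < a i := by
  intro i
  have h0 : 0 < a 0 := hApos _ (hrange ▸ Set.mem_range_self 0)
  have := mono_gap ha 0 i (Nat.zero_le i)
  simp at this
  omega

lemma window_lemma {A : Set ℤ} (hApos : ∀ x ∈ A, 0 < x)
    {a : ℕ → ℤ} (ha : StrictMono a) (hrange : Set.range a = A)
    {f : ℤ → ℝ} (hfpos : ∀ x ∈ A, 0 < f x) {C : ℝ} (hC1 : 1 ≤ C)
    (hC : ∀ x ∈ A, |(x : ℝ) - f x| ≤ C)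
    (hfin : ∀ R : ℝ,
      ({x : ℝ | ∃ s ∈ f '' A, ∃ t ∈ f '' A, t ≤ s ∧ x = s / t} ∩ Set.Icc 1 R).Finite)
    (R : ℝ) (hR : 1 ≤ R) :
    ∃ B : ℕ, ∀ p q : ℕ, p ≤ q → (a q : ℝ) ≤ R * (a p : ℝ) → q - p ≤ B := by
  classical
  have hC0 : 0 ≤ C := le_trans zero_le_one hC1
  set P := (hfin (4 * R)).toFinset.card with hP
  set Cn := ⌈C⌉₊ with hCn
  refine ⟨⌈R * (2 * C + 1)⌉₊ + (2 * Cn + 1) * P, ?_⟩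
  intro p q hpq hle
  have haA : ∀ i : ℕ, a i ∈ A := fun i => hrange ▸ Set.mem_range_self i
  have hapos : ∀ i : ℕ, 0 < a i := fun i => hApos _ (haA i)
  have happ : (0 : ℝ) < (a p : ℝ) := by exact_mod_cast hapos p
  by_cases hsmall : (a p : ℝ) ≤ 2 * C + 1
  · have h1 : ((q : ℤ) : ℝ) < (a q : ℝ) := by
      exact_mod_cast idx_lt hApos ha hrange q
    have h2 : (q : ℝ) < R * (2 * C + 1) := by
      push_cast at h1
      calc (q : ℝ) < (a q : ℝ) := h1
        _ ≤ R * (a p : ℝ) := hle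
        _ ≤ R * (2 * C + 1) := by nlinarith
    have : q < ⌈R * (2 * C + 1)⌉₊ := Nat.lt_ceil.2 h2
    omega
  · push_neg at hsmall
    set T := Finset.Icc p q with hT
    have hpT : p ∈ T := Finset.mem_Icc.2 ⟨le_refl p, hpq⟩
    set g : ℕ → ℝ := fun i => f (a i) with hg
    obtain ⟨i₀, hi₀T, hmin⟩ := T.exists_min_image g ⟨p, hpT⟩
    have hval : ∀ i ∈ T, (a p : ℝ) ≤ (a i : ℝ) ∧ (a i : ℝ) ≤ R * (a p : ℝ) := by
      intro i hi
      rw [Finset.mem_Icc] at hi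
      constructor
      · exact_mod_cast ha.monotone hi.1
      · calc ((a i : ℤ) : ℝ) ≤ (a q : ℝ) := by exact_mod_cast ha.monotone hi.2
          _ ≤ R * (a p : ℝ) := hle
    have hgC : ∀ i : ℕ, |(a i : ℝ) - g i| ≤ C := fun i => hC _ (haA i)
    have hgpos : ∀ i : ℕ, 0 < g i := fun i => hfpos _ (haA i)
    have hglb : ∀ i ∈ T, (a p : ℝ) - C ≤ g i := by
      intro i hi
      have h1 := (hval i hi).1
      have h2 := abs_le.1 (hgC i)
      linarith [h2.2]
    have hgub : ∀ i ∈ T, g i ≤ R * (a p : ℝ) + C := by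
      intro i hi
      have h1 := (hval i hi).2
      have h2 := abs_le.1 (hgC i)
      linarith [h2.1]
    have hφpos : 0 < g i₀ := hgpos i₀
    set δfun : ℕ → ℝ := fun i => g i / g i₀ with hδ
    have hδmem : ∀ i ∈ T, δfun i ∈ (hfin (4 * R)).toFinset := by
      intro i hi
      rw [Set.Finite.mem_toFinset]
      refine ⟨⟨g i, ⟨a i, haA i, rfl⟩, g i₀, ⟨a i₀, haA i₀, rfl⟩, hmin i hi, rfl⟩, ?_, ?_⟩
      · rw [le_div_iff₀ hφpos]
        simpa using hmin i hi
      · rw [div_le_iff₀ hφpos]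
        have h1 := hgub i hi
        have h2 := hglb i₀ hi₀T
        nlinarith [hsmall, hC0, hR, happ]
    have hfiber : ∀ b ∈ T.image δfun, (T.filter (fun i => δfun i = b)).card ≤ 2 * Cn + 1 := by
      intro b _
      set Fb := T.filter (fun i => δfun i = b) with hFb
      rcases Finset.eq_empty_or_nonempty Fb with he | hne
      · simp [he]
      · have hsub : Fb ⊆ Finset.Icc (Fb.min' hne) (Fb.min' hne + 2 * Cn) := by
          intro i hi
          set i1 := Fb.min' hne with hi1
          have hi1F : i1 ∈ Fb := Fb.min'_mem hne
          have hle1 : i1 ≤ i := Fb.min'_le i hi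
          rw [Finset.mem_Icc]
          refine ⟨hle1, ?_⟩
          have hgi : g i = g i1 := by
            have e1 : δfun i = b := (Finset.mem_filter.1 hi).2
            have e2 : δfun i1 = b := (Finset.mem_filter.1 hi1F).2
            have : g i / g i₀ = g i1 / g i₀ := by rw [hδ] at e1 e2; simp only at e1 e2; rw [e1, e2]
            field_simp at this
            exact this
          have hai : (a i : ℝ) ≤ (a i1 : ℝ) + 2 * C := by
            have h1 := abs_le.1 (hgC i)
            have h2 := abs_le.1 (hgC i1)
            linarith [h1.1, h2.2, hgi.le, hgi.ge]
          have hgap := mono_gap ha i1 i hle1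
          have hcast : ((i - i1 : ℕ) : ℝ) ≤ 2 * C := by
            have : (a i1 : ℝ) + ((i - i1 : ℕ) : ℝ) ≤ (a i : ℝ) := by exact_mod_cast hgap
            linarith
          have : ((i - i1 : ℕ) : ℝ) ≤ ((2 * Cn : ℕ) : ℝ) := by
            push_cast
            calc ((i - i1 : ℕ) : ℝ) ≤ 2 * C := hcast
              _ ≤ 2 * (Cn : ℝ) := by have := Nat.le_ceil C; linarith
          have hnat : i - i1 ≤ 2 * Cn := by exact_mod_cast this
          omega
        calc Fb.card ≤ (Finset.Icc (Fb.min' hne) (Fb.min' hne + 2 * Cn)).card :=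
              Finset.card_le_card hsub
          _ = 2 * Cn + 1 := by rw [Nat.card_Icc]; omega
    have himg : (T.image δfun).card ≤ P := by
      rw [hP]
      exact Finset.card_le_card (fun b hb => by
        obtain ⟨i, hi, rfl⟩ := Finset.mem_image.1 hb
        exact hδmem i hi)
    have hcard : T.card ≤ (2 * Cn + 1) * P := by
      calc T.card ≤ (2 * Cn + 1) * (T.image δfun).card :=
            Finset.card_le_mul_card_image T (2 * Cn + 1) hfiber
        _ ≤ (2 * Cn + 1) * P := Nat.mul_le_mul_left _ himg
    have : T.card = q + 1 - p := by rw [hT, Nat.card_Icc]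
    omega

/-- For `A ⊆ ℤ⁺` infinite and geometrically sparse with strictly increasing
enumeration `(a_n)`, and `k, l ≥ 1`, `r ∈ ℤ`, there are `s, t* ≥ 0` such that for every
`t ≥ 0` there is `t' ≥ 0` with: for any `(m̄,n̄) ∈ A(k,l,r)` with `max m̄ − min m̄ ≤ t`,
either `(m̄,n̄) ∈ A(k,l,r,s)` or `max(m̄,n̄) − min(m̄,n̄) ≤ t'`. -/
theorem inRelS_or_bounded_spread (A : Set ℤ) (hApos : ∀ x ∈ A, 0 < x) (hGS : GeomSparse A)
    (a : ℕ → ℤ) (ha : StrictMono a) (hrange : Set.range a = A)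
    (k l : ℕ) (hk : 1 ≤ k) (hl : 1 ≤ l) (r : ℤ) :
    ∃ s tstar : ℕ, ∀ t : ℕ, ∃ t' : ℕ,
      ∀ (m : Fin k → ℕ) (n : Fin l → ℕ), inRel a r m n →
        sSup (Set.range m) - sInf (Set.range m) ≤ t →
        (inRelS a r (s : ℤ) m n ∨
          sSup (Set.range m ∪ Set.range n) - sInf (Set.range m ∪ Set.range n) ≤ t') := by
  classical
  obtain ⟨f, hfpos, ⟨hScl, hSd⟩, C0, hC00⟩ := hGS
  set C : ℝ := max C0 1 with hCdef
  have hC1 : 1 ≤ C := le_max_right _ _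
  have hC0 : 0 ≤ C := by linarith
  have hC : ∀ x ∈ A, |(x : ℝ) - f x| ≤ C := fun x hx => le_trans (hC00 x hx) (le_max_left _ _)
  have hfin : ∀ R : ℝ,
      ({x : ℝ | ∃ s ∈ f '' A, ∃ t ∈ f '' A, t ≤ s ∧ x = s / t} ∩ Set.Icc 1 R).Finite :=
    fun R => ratio_finite hScl hSd R
  set K := k + l with hK
  have hK2 : 2 ≤ K := by omega
  have hKr : (2 : ℝ) ≤ (K : ℝ) := by exact_mod_cast hK2
  -- the epsilon function
  have hEx : ∀ R : ℝ, ∃ ε : ℝ, 0 < ε ∧ ε ≤ 1 ∧ ∀ c : ℝ → ℤ,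
      (∀ δ ∈ (hfin (4 * R)).toFinset, |c δ| ≤ (K : ℤ)) →
      (∑ δ ∈ (hfin (4 * R)).toFinset, (c δ : ℝ) * δ) ≠ 0 →
      ε ≤ |∑ δ ∈ (hfin (4 * R)).toFinset, (c δ : ℝ) * δ| :=
    fun R => eps_lemma _ K
  set ε : ℝ → ℝ := fun R => (hEx R).choose with hεdef
  have hεpos : ∀ R, 0 < ε R := fun R => (hEx R).choose_spec.1
  have hεle : ∀ R, ε R ≤ 1 := fun R => (hEx R).choose_spec.2.1
  have hεspec : ∀ R, ∀ c : ℝ → ℤ,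
      (∀ δ ∈ (hfin (4 * R)).toFinset, |c δ| ≤ (K : ℤ)) →
      (∑ δ ∈ (hfin (4 * R)).toFinset, (c δ : ℝ) * δ) ≠ 0 →
      ε R ≤ |∑ δ ∈ (hfin (4 * R)).toFinset, (c δ : ℝ) * δ| :=
    fun R => (hEx R).choose_spec.2.2
  -- the rho sequence
  set ρ : ℕ → ℝ := fun j =>
    Nat.rec (motive := fun _ => ℝ) (((|r| : ℝ) + K + 1) ^ 2)
      (fun _ prev => (4 * K / ε prev) * prev) j with hρdef
  have hρ0 : ρ 0 = (((|r| : ℝ) + K + 1)) ^ 2 := rfl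
  have hρsucc : ∀ j, ρ (j + 1) = (4 * K / ε (ρ j)) * ρ j := fun j => rfl
  have hrabs : (0 : ℝ) ≤ (|r| : ℝ) := by positivity
  have hρ1 : ∀ j, 1 ≤ ρ j := by
    intro j
    induction j with
    | zero => rw [hρ0]; nlinarith
    | succ j ih =>
      rw [hρsucc]
      have h1 := hεpos (ρ j)
      have h2 := hεle (ρ j)
      have h3 : 1 ≤ 4 * (K : ℝ) / ε (ρ j) := by
        rw [le_div_iff₀ h1]; nlinarith
      nlinarith
  have hρmono : Monotone ρ := by
    apply monotone_nat_of_le_succ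
    intro j
    rw [hρsucc]
    have h1 := hεpos (ρ j)
    have h2 := hεle (ρ j)
    have h3 : 1 ≤ 4 * (K : ℝ) / ε (ρ j) := by rw [le_div_iff₀ h1]; nlinarith
    nlinarith [hρ1 j]
  -- the constant U
  set u : ℕ → ℝ := fun j =>
    2 * ρ j * ((|r| : ℝ) + C + K * C + 1) / ε (ρ j) + 2 * ρ j * C with hudef
  have hunn : ∀ j, 0 ≤ u j := by
    intro j
    have h1 := hεpos (ρ j)
    have h2 := hρ1 j
    have hKC : (0:ℝ) ≤ (K:ℝ) * C := mul_nonneg (by linarith) hC0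
    have h3 : (0:ℝ) ≤ 2 * ρ j * ((|r| : ℝ) + C + K * C + 1) :=
      mul_nonneg (by linarith) (by linarith)
    have h4 : (0:ℝ) ≤ 2 * ρ j * ((|r| : ℝ) + C + K * C + 1) / ε (ρ j) := div_nonneg h3 h1.le
    have h5 : (0:ℝ) ≤ 2 * ρ j * C := by nlinarith
    rw [hudef]
    exact add_nonneg h4 h5
  set U : ℝ := ∑ j ∈ Finset.range K, u j with hUdef
  have hUnn : 0 ≤ U := Finset.sum_nonneg fun j _ => hunn j
  have huU : ∀ j < K, u j ≤ U :=
    fun j hj => Finset.single_le_sum (fun i _ => hunn i) (Finset.mem_range.2 hj)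
  -- window bound
  obtain ⟨B, hB⟩ := window_lemma hApos ha hrange hfpos hC1 hC hfin (ρ K) (hρ1 K)
  -- basic facts
  have haA : ∀ i : ℕ, a i ∈ A := fun i => hrange ▸ Set.mem_range_self i
  have hapos : ∀ i : ℕ, 0 < a i := fun i => hApos _ (haA i)
  have ha1 : ∀ i : ℕ, 1 ≤ a i := fun i => hapos i
  refine ⟨⌈(K : ℝ) * C⌉₊, 0, fun t => ⟨⌈U⌉₊ + B + 1, ?_⟩⟩
  intro m n hmn hsprm
  set T : Set ℕ := Set.range m ∪ Set.range n with hTdef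
  have hTne : T.Nonempty := ⟨m ⟨0, hk⟩, Or.inl (Set.mem_range_self _)⟩
  -- the value function on positions
  set val : Fin k ⊕ Fin l → ℤ := Sum.elim (fun i => a (m i)) (fun j => a (n j)) with hvaldef
  have hval1 : ∀ p, 1 ≤ val p := by rintro (i | j) <;> exact ha1 _
  have hvalA : ∀ p, val p ∈ A := by rintro (i | j) <;> exact haA _
  obtain ⟨iM, _, hiM⟩ := Finset.exists_max_image Finset.univ (fun i => a (m i))
    ⟨⟨0, hk⟩, Finset.mem_univ _⟩
  obtain ⟨jN, _, hjN⟩ := Finset.exists_max_image Finset.univ (fun j => a (n j))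
    ⟨⟨0, hl⟩, Finset.mem_univ _⟩
  set V : ℤ := max (a (m iM)) (a (n jN)) with hVdef
  have hVub : ∀ p, val p ≤ V := by
    rintro (i | j)
    · exact le_trans (hiM i (Finset.mem_univ _)) (le_max_left _ _)
    · exact le_trans (hjN j (Finset.mem_univ _)) (le_max_right _ _)
  have hV1 : 1 ≤ V := le_trans (ha1 _) (le_max_left _ _)
  -- sum bounds
  have hsum_m_ub : ∑ i, a (m i) ≤ (k : ℤ) * a (m iM) := by
    calc ∑ i, a (m i) ≤ Finset.univ.card • a (m iM) :=
          Finset.sum_le_card_nsmul _ _ _ (fun i _ => hiM i (Finset.mem_univ _))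
      _ = (k : ℤ) * a (m iM) := by simp [nsmul_eq_mul]
  have hsum_n_ub : ∑ j, a (n j) ≤ (l : ℤ) * a (n jN) := by
    calc ∑ j, a (n j) ≤ Finset.univ.card • a (n jN) :=
          Finset.sum_le_card_nsmul _ _ _ (fun j _ => hjN j (Finset.mem_univ _))
      _ = (l : ℤ) * a (n jN) := by simp [nsmul_eq_mul]
  have hsingle_m : a (m iM) ≤ ∑ i, a (m i) :=
    Finset.single_le_sum (fun i _ => (hapos (m i)).le) (Finset.mem_univ iM)
  have hsingle_n : a (n jN) ≤ ∑ j, a (n j) :=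
    Finset.single_le_sum (fun j _ => (hapos (n j)).le) (Finset.mem_univ jN)
  have hNM : a (n jN) ≤ |r| + (k : ℤ) * a (m iM) := by
    have := hmn
    unfold inRel at this
    have h1 : a (n jN) ≤ r + ∑ i, a (m i) := this ▸ hsingle_n
    have h2 : r ≤ |r| := le_abs_self r
    omega
  have hMN : a (m iM) ≤ |r| + (l : ℤ) * a (n jN) := by
    have := hmn
    unfold inRel at this
    have h1 : r + a (m iM) ≤ ∑ j, a (n j) := by
      have := hsingle_m
      omega
    have h2 : -r ≤ |r| := neg_le_abs r
    have h3 := hsum_n_ub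
    omega
  have hVM : (V : ℝ) ≤ ρ 0 * (a (m iM) : ℝ) := by
    have h1 : V ≤ (|r| + K + 1) * a (m iM) := by
      rw [hVdef]
      have hm1 : (1 : ℤ) ≤ a (m iM) := ha1 _
      have habs : (0 : ℤ) ≤ |r| := abs_nonneg r
      rcases max_cases (a (m iM)) (a (n jN)) with ⟨hmax, _⟩ | ⟨hmax, _⟩ <;> rw [hmax]
      · nlinarith
      · have := hNM
        have hkK : (k : ℤ) ≤ (K : ℤ) := by exact_mod_cast Nat.le_add_right k l
        nlinarith
    have h2 : ((V : ℤ) : ℝ) ≤ (((|r| + K + 1) * a (m iM) : ℤ) : ℝ) := by exact_mod_cast h1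
    push_cast at h2
    rw [hρ0]
    have hm1 : (1 : ℝ) ≤ (a (m iM) : ℝ) := by exact_mod_cast ha1 (m iM)
    have hx : (1:ℝ) ≤ |(r:ℝ)| + (K:ℝ) + 1 := by linarith
    have hxx : |(r:ℝ)| + (K:ℝ) + 1 ≤ (|(r:ℝ)| + (K:ℝ) + 1)^2 := by nlinarith
    calc ((V:ℤ):ℝ) ≤ (|(r:ℝ)| + (K:ℝ) + 1) * (a (m iM) : ℝ) := h2
      _ ≤ (|(r:ℝ)| + (K:ℝ) + 1)^2 * (a (m iM) : ℝ) :=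
          mul_le_mul_of_nonneg_right hxx (by linarith)
  have hVN : (V : ℝ) ≤ ρ 0 * (a (n jN) : ℝ) := by
    have h1 : V ≤ (|r| + K + 1) * a (n jN) := by
      rw [hVdef]
      have hm1 : (1 : ℤ) ≤ a (n jN) := ha1 _
      have habs : (0 : ℤ) ≤ |r| := abs_nonneg r
      rcases max_cases (a (m iM)) (a (n jN)) with ⟨hmax, _⟩ | ⟨hmax, _⟩ <;> rw [hmax]
      · have := hMN
        have hlK : (l : ℤ) ≤ (K : ℤ) := by exact_mod_cast Nat.le_add_left l k
        nlinarith
      · nlinarith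
    have h2 : ((V : ℤ) : ℝ) ≤ (((|r| + K + 1) * a (n jN) : ℤ) : ℝ) := by exact_mod_cast h1
    push_cast at h2
    rw [hρ0]
    have hm1 : (1 : ℝ) ≤ (a (n jN) : ℝ) := by exact_mod_cast ha1 (n jN)
    have hx : (1:ℝ) ≤ |(r:ℝ)| + (K:ℝ) + 1 := by linarith
    have hxx : |(r:ℝ)| + (K:ℝ) + 1 ≤ (|(r:ℝ)| + (K:ℝ) + 1)^2 := by nlinarith
    calc ((V:ℤ):ℝ) ≤ (|(r:ℝ)| + (K:ℝ) + 1) * (a (n jN) : ℝ) := h2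
      _ ≤ (|(r:ℝ)| + (K:ℝ) + 1)^2 * (a (n jN) : ℝ) :=
          mul_le_mul_of_nonneg_right hxx (by linarith)
  -- the Big sets
  set Big : ℕ → Finset (Fin k ⊕ Fin l) := fun j =>
    Finset.univ.filter (fun p => (V : ℝ) ≤ ρ j * (val p : ℝ)) with hBigdef
  have hBigmem : ∀ j p, p ∈ Big j ↔ (V : ℝ) ≤ ρ j * (val p : ℝ) := by
    intro j p
    rw [hBigdef]
    simp
  have hBigmono : ∀ j j', j ≤ j' → Big j ⊆ Big j' := by
    intro j j' hjj' p hp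
    rw [hBigmem] at hp ⊢
    have h1 : ρ j ≤ ρ j' := hρmono hjj'
    have h2 : (1 : ℝ) ≤ (val p : ℝ) := by exact_mod_cast hval1 p
    nlinarith
  have hM0 : Sum.inl iM ∈ Big 0 := by
    rw [hBigmem]
    exact hVM
  have hN0 : Sum.inr jN ∈ Big 0 := by
    rw [hBigmem]
    exact hVN
  have hcardK : ∀ j, (Big j).card ≤ K := by
    intro j
    calc (Big j).card ≤ Finset.univ.card := Finset.card_le_univ _
      _ = K := by simp [hK]
  -- pigeonhole
  have hpigeon : ∃ j, j + 2 ≤ K ∧ Big j = Big (j + 1) := by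
    by_contra hcon
    push_neg at hcon
    have hstep : ∀ j, j + 2 ≤ K → (Big j).card < (Big (j + 1)).card := by
      intro j hj
      exact Finset.card_lt_card (Finset.ssubset_iff_subset_ne.2
        ⟨hBigmono j (j + 1) (Nat.le_succ j), hcon j hj⟩)
    have hbase : 2 ≤ (Big 0).card := by
      have : ({Sum.inl iM, Sum.inr jN} : Finset (Fin k ⊕ Fin l)) ⊆ Big 0 := by
        intro p hp
        rcases Finset.mem_insert.1 hp with rfl | hp
        · exact hM0
        · rw [Finset.mem_singleton.1 hp]; exact hN0
      calc 2 = ({Sum.inl iM, Sum.inr jN} : Finset (Fin k ⊕ Fin l)).card := by simp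
        _ ≤ (Big 0).card := Finset.card_le_card this
    have hgrow : ∀ j, j + 1 ≤ K → 2 + j ≤ (Big j).card := by
      intro j
      induction j with
      | zero => intro _; simpa using hbase
      | succ j ih =>
        intro hj
        have h1 := ih (by omega)
        have h2 := hstep j (by omega)
        omega
    have := hgrow (K - 1) (by omega)
    have := hcardK (K - 1)
    omega
  obtain ⟨j0, hj0le, hj0eq⟩ := hpigeon
  -- main case split
  by_cases hdeg : (V : ℝ) ≤ U
  · -- degenerate case: all indices bounded
    right
    have hidx : ∀ y ∈ T, y ≤ ⌈U⌉₊ := by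
      intro y hy
      have hay : a y ≤ V := by
        rcases hy with ⟨i, rfl⟩ | ⟨j, rfl⟩
        · exact hVub (Sum.inl i)
        · exact hVub (Sum.inr j)
      have h1 : (y : ℤ) < a y := idx_lt hApos ha hrange y
      have h2 : (y : ℝ) ≤ U := by
        have : ((y : ℤ) : ℝ) < (V : ℝ) := by exact_mod_cast lt_of_lt_of_le h1 hay
        push_cast at this
        linarith
      exact_mod_cast le_trans h2 (Nat.le_ceil U)
    have hsup : sSup T ≤ ⌈U⌉₊ := csSup_le hTne hidx
    have hfinal : sSup T ≤ (⌈U⌉₊ + B + 1) + sInf T := by omega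
    omega
  · push_neg at hdeg
    by_cases huniv : Big j0 = Finset.univ
    · -- all values comparable: bounded spread
      right
      have hallbig : ∀ p, (V : ℝ) ≤ ρ j0 * (val p : ℝ) := by
        intro p
        have : p ∈ Big j0 := huniv ▸ Finset.mem_univ p
        exact (hBigmem j0 p).1 this
      have hpair : ∀ x ∈ T, ∀ y ∈ T, x ≤ y → y - x ≤ B := by
        intro x hx y hy hxy
        apply hB x y hxy
        have h1 : ∃ px, val px = a x := by
          rcases hx with ⟨i, rfl⟩ | ⟨j, rfl⟩
          exacts [⟨Sum.inl i, rfl⟩, ⟨Sum.inr j, rfl⟩]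
        have h2 : ∃ py, val py = a y := by
          rcases hy with ⟨i, rfl⟩ | ⟨j, rfl⟩
          exacts [⟨Sum.inl i, rfl⟩, ⟨Sum.inr j, rfl⟩]
        obtain ⟨px, hpx⟩ := h1
        obtain ⟨py, hpy⟩ := h2
        have h3 : (a y : ℝ) ≤ (V : ℝ) := by exact_mod_cast hpy ▸ hVub py
        have h4 : (V : ℝ) ≤ ρ j0 * (a x : ℝ) := hpx ▸ hallbig px
        have h5 : ρ j0 ≤ ρ K := hρmono (by omega)
        have h6 : (0 : ℝ) < (a x : ℝ) := by exact_mod_cast hapos x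
        nlinarith
      have hx0 : sInf T ∈ T := Nat.sInf_mem hTne
      have hsup : sSup T ≤ (⌈U⌉₊ + B + 1) + sInf T := by
        apply csSup_le hTne
        intro y hy
        have := hpair (sInf T) hx0 y hy (Nat.sInf_le hy)
        omega
      omega
    · -- the splitting case
      left
      set Bg := Big j0 with hBgdef
      set I : Finset (Fin k) := Finset.univ.filter (fun i => Sum.inl i ∉ Bg) with hIdef
      set J : Finset (Fin l) := Finset.univ.filter (fun j' => Sum.inr j' ∉ Bg) with hJdef
      have hMBg : Sum.inl iM ∈ Bg := hBigmono 0 j0 (Nat.zero_le _) hM0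
      have hNBg : Sum.inr jN ∈ Bg := hBigmono 0 j0 (Nat.zero_le _) hN0
      have hInu : I ≠ Finset.univ := by
        intro hcon
        have : iM ∈ I := hcon ▸ Finset.mem_univ iM
        rw [hIdef, Finset.mem_filter] at this
        exact this.2 hMBg
      have hJnu : J ≠ Finset.univ := by
        intro hcon
        have : jN ∈ J := hcon ▸ Finset.mem_univ jN
        rw [hJdef, Finset.mem_filter] at this
        exact this.2 hNBg
      have hnon : I.Nonempty ∨ J.Nonempty := by
        obtain ⟨p, hp⟩ : ∃ p, p ∉ Bg := by
          by_contra hcon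
          push_neg at hcon
          exact huniv (Finset.eq_univ_iff_forall.2 hcon)
        rcases p with i | j'
        · exact Or.inl ⟨i, by rw [hIdef, Finset.mem_filter]; exact ⟨Finset.mem_univ _, hp⟩⟩
        · exact Or.inr ⟨j', by rw [hJdef, Finset.mem_filter]; exact ⟨Finset.mem_univ _, hp⟩⟩
      have hIc : ∀ i : Fin k, i ∈ Iᶜ ↔ Sum.inl i ∈ Bg := by
        intro i
        rw [Finset.mem_compl, hIdef, Finset.mem_filter]
        simp
      have hJc : ∀ j' : Fin l, j' ∈ Jᶜ ↔ Sum.inr j' ∈ Bg := by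
        intro j'
        rw [Finset.mem_compl, hJdef, Finset.mem_filter]
        simp
      set s' : ℤ := (∑ j' ∈ J, a (n j')) - (∑ i ∈ I, a (m i)) - r with hs'def
      have heq1 : r + s' + ∑ i ∈ I, a (m i) = ∑ j' ∈ J, a (n j') := by rw [hs'def]; ring
      have heq2 : ∑ i ∈ Iᶜ, a (m i) = s' + ∑ j' ∈ Jᶜ, a (n j') := by
        have h1 : ∑ i ∈ I, a (m i) + ∑ i ∈ Iᶜ, a (m i) = ∑ i, a (m i) :=
          Finset.sum_add_sum_compl I _
        have h2 : ∑ j' ∈ J, a (n j') + ∑ j' ∈ Jᶜ, a (n j') = ∑ j', a (n j') :=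
          Finset.sum_add_sum_compl J _
        have h3 := hmn
        unfold inRel at h3
        rw [hs'def]
        omega
      -- abbreviations
      have hEpos : 0 < ε (ρ j0) := hεpos _
      have hEle : ε (ρ j0) ≤ 1 := hεle _
      have hP1 : (1 : ℝ) ≤ ρ j0 := hρ1 _
      have hPnn : (0 : ℝ) ≤ ρ j0 := by linarith
      have hj0K : j0 < K := by omega
      have huj0 : u j0 ≤ U := huU j0 hj0K
      have hu2 : 2 * ρ j0 * C ≤ u j0 := by
        rw [hudef]
        simp only
        have hKC : (0:ℝ) ≤ (K:ℝ) * C := mul_nonneg (by linarith) hC0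
        have h3 : (0:ℝ) ≤ 2 * ρ j0 * ((|r| : ℝ) + C + K * C + 1) :=
          mul_nonneg (by linarith) (by linarith)
        have h4 := div_nonneg h3 hEpos.le
        linarith
      have hVr1 : (1 : ℝ) ≤ ((V : ℤ) : ℝ) := by exact_mod_cast hV1
      have hV2PC : 2 * ρ j0 * C ≤ ((V : ℤ) : ℝ) := by linarith
      set g : Fin k ⊕ Fin l → ℝ := fun p => f (val p) with hgdef
      have hgpos : ∀ p, 0 < g p := fun p => hfpos _ (hvalA p)
      have hgC : ∀ p, |(val p : ℝ) - g p| ≤ C := fun p => hC _ (hvalA p)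
      have hBgne : Bg.Nonempty := ⟨_, hMBg⟩
      obtain ⟨p₀, hp₀Bg, hminp⟩ := Bg.exists_min_image g hBgne
      have hφpos : 0 < g p₀ := hgpos p₀
      have hVlow : ∀ p ∈ Bg, ((V:ℤ):ℝ) ≤ ρ j0 * ((val p : ℤ) : ℝ) :=
        fun p hp => (hBigmem j0 p).1 hp
      have hvalV : ∀ p, ((val p : ℤ) : ℝ) ≤ ((V:ℤ):ℝ) := by
        intro p; exact_mod_cast hVub p
      have hφlb : ((V:ℤ):ℝ) - ρ j0 * C ≤ ρ j0 * g p₀ := by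
        have hc2 : ((val p₀ : ℤ):ℝ) - g p₀ ≤ C := (abs_le.1 (hgC p₀)).2
        have h3 := mul_le_mul_of_nonneg_left hc2 hPnn
        rw [mul_sub] at h3
        have h4 := hVlow p₀ hp₀Bg
        linarith
      set Δ := (hfin (4 * ρ j0)).toFinset with hΔdef
      have hδmem : ∀ p ∈ Bg, g p / g p₀ ∈ Δ := by
        intro p hp
        rw [hΔdef, Set.Finite.mem_toFinset]
        refine ⟨⟨g p, ⟨val p, hvalA p, rfl⟩, g p₀, ⟨val p₀, hvalA p₀, rfl⟩, hminp p hp, rfl⟩,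
          ?_, ?_⟩
        · rw [le_div_iff₀ hφpos]; simpa using hminp p hp
        · rw [div_le_iff₀ hφpos]
          have h1 : g p ≤ ((V:ℤ):ℝ) + C := by
            have ha1' := abs_le.1 (hgC p)
            have := hvalV p
            linarith [ha1'.1]
          have hPC : C ≤ ρ j0 * C := le_mul_of_one_le_left hC0 hP1
          have hPCnn : (0:ℝ) ≤ ρ j0 * C := le_trans hC0 hPC
          have h5 : ((V:ℤ):ℝ) + C ≤ 4 * (ρ j0 * g p₀) := by linarith
          calc g p ≤ ((V:ℤ):ℝ) + C := h1
            _ ≤ 4 * (ρ j0 * g p₀) := h5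
            _ = 4 * ρ j0 * g p₀ := by ring
      set δf : Fin k ⊕ Fin l → ℝ := fun p => g p / g p₀ with hδfdef
      set cf : ℝ → ℤ := fun δ =>
        (((Iᶜ).filter (fun i => δf (Sum.inl i) = δ)).card : ℤ)
          - (((Jᶜ).filter (fun j' => δf (Sum.inr j') = δ)).card : ℤ) with hcfdef
      have hmapI : ∀ i ∈ Iᶜ, δf (Sum.inl i) ∈ Δ := fun i hi => hδmem _ ((hIc i).1 hi)
      have hmapJ : ∀ j' ∈ Jᶜ, δf (Sum.inr j') ∈ Δ := fun j' hj' => hδmem _ ((hJc j').1 hj')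
      have hcbound : ∀ δ ∈ Δ, |cf δ| ≤ (K:ℤ) := by
        intro δ _
        rw [hcfdef]
        have h1 : ((Iᶜ).filter (fun i => δf (Sum.inl i) = δ)).card ≤ k :=
          le_trans (Finset.card_filter_le _ _) (le_trans (Finset.card_le_univ _) (by simp))
        have h2 : ((Jᶜ).filter (fun j' => δf (Sum.inr j') = δ)).card ≤ l :=
          le_trans (Finset.card_filter_le _ _) (le_trans (Finset.card_le_univ _) (by simp))
        rw [abs_le]
        constructor <;> [skip; skip] <;>
          · simp only [hK]
            push_cast
            omega
      set D : ℝ := ∑ δ ∈ Δ, (cf δ : ℝ) * δ with hDdef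
      have hfwI : ∑ δ ∈ Δ, ((((Iᶜ).filter (fun i => δf (Sum.inl i) = δ)).card : ℝ)) * δ
          = ∑ i ∈ Iᶜ, δf (Sum.inl i) := by
        rw [← Finset.sum_fiberwise_of_maps_to hmapI (fun i => δf (Sum.inl i))]
        refine Finset.sum_congr rfl (fun δ _ => ?_)
        rw [Finset.sum_congr rfl (fun i hi => (Finset.mem_filter.1 hi).2),
          Finset.sum_const, nsmul_eq_mul]
      have hfwJ : ∑ δ ∈ Δ, ((((Jᶜ).filter (fun j' => δf (Sum.inr j') = δ)).card : ℝ)) * δ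
          = ∑ j' ∈ Jᶜ, δf (Sum.inr j') := by
        rw [← Finset.sum_fiberwise_of_maps_to hmapJ (fun j' => δf (Sum.inr j'))]
        refine Finset.sum_congr rfl (fun δ _ => ?_)
        rw [Finset.sum_congr rfl (fun j' hj' => (Finset.mem_filter.1 hj').2),
          Finset.sum_const, nsmul_eq_mul]
      have hfw : D = (∑ i ∈ Iᶜ, δf (Sum.inl i)) - (∑ j' ∈ Jᶜ, δf (Sum.inr j')) := by
        rw [hDdef, ← hfwI, ← hfwJ, ← Finset.sum_sub_distrib]
        refine Finset.sum_congr rfl (fun δ _ => ?_)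
        rw [hcfdef]
        push_cast
        ring
      have hφD : g p₀ * D = (∑ i ∈ Iᶜ, g (Sum.inl i)) - (∑ j' ∈ Jᶜ, g (Sum.inr j')) := by
        rw [hfw, mul_sub, Finset.mul_sum, Finset.mul_sum]
        congr 1 <;> refine Finset.sum_congr rfl (fun p _ => ?_) <;>
          · rw [hδfdef]
            field_simp
      have hvinl : ∀ i, val (Sum.inl i) = a (m i) := fun i => rfl
      have hvinr : ∀ j', val (Sum.inr j') = a (n j') := fun j' => rfl
      have hs'cast : (s' : ℝ)
          = (∑ i ∈ Iᶜ, ((a (m i) : ℤ) : ℝ)) - (∑ j' ∈ Jᶜ, ((a (n j') : ℤ) : ℝ)) := by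
        have h := heq2
        have h2 : ((∑ i ∈ Iᶜ, a (m i) : ℤ) : ℝ) = ((s' + ∑ j' ∈ Jᶜ, a (n j') : ℤ) : ℝ) := by
          exact_mod_cast congrArg (fun z : ℤ => (z : ℝ)) h
        push_cast at h2 ⊢
        linarith
      have hEdiff : |(s' : ℝ) - g p₀ * D| ≤ (K:ℝ) * C := by
        have hre : (s' : ℝ) - g p₀ * D
            = (∑ i ∈ Iᶜ, (((a (m i) : ℤ) : ℝ) - g (Sum.inl i)))
              - (∑ j' ∈ Jᶜ, (((a (n j') : ℤ) : ℝ) - g (Sum.inr j'))) := by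
          rw [hs'cast, hφD, Finset.sum_sub_distrib, Finset.sum_sub_distrib]
          ring
        have h1 : |∑ i ∈ Iᶜ, (((a (m i) : ℤ) : ℝ) - g (Sum.inl i))| ≤ (k:ℝ) * C := by
          refine le_trans (Finset.abs_sum_le_sum_abs _ _) ?_
          refine le_trans (Finset.sum_le_card_nsmul _ _ C (fun i _ => hgC (Sum.inl i))) ?_
          rw [nsmul_eq_mul]
          have : ((Iᶜ).card : ℝ) ≤ (k : ℝ) := by
            exact_mod_cast le_trans (Finset.card_le_univ _) (le_of_eq (by simp))
          exact mul_le_mul_of_nonneg_right this hC0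
        have h2 : |∑ j' ∈ Jᶜ, (((a (n j') : ℤ) : ℝ) - g (Sum.inr j'))| ≤ (l:ℝ) * C := by
          refine le_trans (Finset.abs_sum_le_sum_abs _ _) ?_
          refine le_trans (Finset.sum_le_card_nsmul _ _ C (fun j' _ => hgC (Sum.inr j'))) ?_
          rw [nsmul_eq_mul]
          have : ((Jᶜ).card : ℝ) ≤ (l : ℝ) := by
            exact_mod_cast le_trans (Finset.card_le_univ _) (le_of_eq (by simp))
          exact mul_le_mul_of_nonneg_right this hC0
        rw [hre]
        have hKkl : (K:ℝ) * C = (k:ℝ) * C + (l:ℝ) * C := by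
          rw [hK]; push_cast; ring
        calc |(∑ i ∈ Iᶜ, (((a (m i) : ℤ) : ℝ) - g (Sum.inl i)))
              - (∑ j' ∈ Jᶜ, (((a (n j') : ℤ) : ℝ) - g (Sum.inr j')))|
            ≤ |∑ i ∈ Iᶜ, (((a (m i) : ℤ) : ℝ) - g (Sum.inl i))|
              + |∑ j' ∈ Jᶜ, (((a (n j') : ℤ) : ℝ) - g (Sum.inr j'))| := abs_sub _ _
          _ ≤ (k:ℝ) * C + (l:ℝ) * C := add_le_add h1 h2
          _ = (K:ℝ) * C := hKkl.symm
      by_cases hD0 : D = 0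
      · -- the splitting witnesses inRelS
        have habs : |(s':ℝ)| ≤ (K:ℝ) * C := by
          have := hEdiff
          rw [hD0, mul_zero, sub_zero] at this
          exact this
        have hsabs : |s'| ≤ ((⌈(K : ℝ) * C⌉₊ : ℕ) : ℤ) := by
          have h2 : ((|s'| : ℤ) : ℝ) ≤ ((( ⌈(K : ℝ) * C⌉₊ : ℕ) : ℤ) : ℝ) := by
            rw [Int.cast_abs]
            push_cast
            exact le_trans habs (Nat.le_ceil _)
          exact_mod_cast h2
        exact ⟨s', hsabs, I, J, hInu, hJnu, hnon, heq1, heq2⟩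
      · -- impossible : contradiction with V > U
        exfalso
        have hDlow : ε (ρ j0) ≤ |D| := by
          have := hεspec (ρ j0) cf hcbound (by rw [← hΔdef, ← hDdef]; exact hD0)
          rw [← hΔdef, ← hDdef] at this
          exact this
        have hφDlow : ε (ρ j0) * g p₀ ≤ |g p₀ * D| := by
          rw [abs_mul, abs_of_pos hφpos, mul_comm]
          exact mul_le_mul_of_nonneg_left hDlow hφpos.le
        have hs'low : ε (ρ j0) * g p₀ - (K:ℝ) * C ≤ |(s':ℝ)| := by
          have habs1 : |g p₀ * D| - |(s':ℝ)| ≤ |g p₀ * D - (s':ℝ)| :=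
            abs_sub_abs_le_abs_sub _ _
          have habs2 : |g p₀ * D - (s':ℝ)| = |(s':ℝ) - g p₀ * D| := abs_sub_comm _ _
          linarith
        -- small values
        have hsmallval : ∀ pp : Fin k ⊕ Fin l, pp ∉ Bg →
            4 * (K:ℝ) * ρ j0 * ((val pp : ℤ) : ℝ) ≤ ε (ρ j0) * ((V:ℤ):ℝ) := by
          intro pp hpp
          have h1 : ¬ (((V:ℤ):ℝ) ≤ ρ (j0+1) * ((val pp : ℤ):ℝ)) := by
            intro hcon
            exact hpp (hj0eq ▸ (hBigmem (j0+1) pp).2 hcon)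
          push_neg at h1
          rw [hρsucc j0] at h1
          have hkey : 4 * (K:ℝ) * ρ j0 * ((val pp : ℤ):ℝ)
              = (4 * (K:ℝ) / ε (ρ j0) * ρ j0 * ((val pp : ℤ):ℝ)) * ε (ρ j0) := by
            field_simp
          have h2 := mul_lt_mul_of_pos_right h1 hEpos
          rw [← hkey] at h2
          have : ((V:ℤ):ℝ) * ε (ρ j0) = ε (ρ j0) * ((V:ℤ):ℝ) := by ring
          linarith
        set W : ℝ := ε (ρ j0) * ((V:ℤ):ℝ) / (4 * (K:ℝ) * ρ j0) with hWdef
        have h4KPpos : (0:ℝ) < 4 * (K:ℝ) * ρ j0 := by nlinarith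
        have htermI : ∀ i ∈ I, ((a (m i) : ℤ):ℝ) ≤ W := by
          intro i hi
          have hnotin : Sum.inl i ∉ Bg := (Finset.mem_filter.1 hi).2
          have hsm := hsmallval (Sum.inl i) hnotin
          have hv : val (Sum.inl i) = a (m i) := rfl
          rw [hv] at hsm
          rw [hWdef, le_div_iff₀ h4KPpos]
          linarith
        have htermJ : ∀ j' ∈ J, ((a (n j') : ℤ):ℝ) ≤ W := by
          intro j' hj'
          have hnotin : Sum.inr j' ∉ Bg := (Finset.mem_filter.1 hj').2
          have hsm := hsmallval (Sum.inr j') hnotin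
          have hv : val (Sum.inr j') = a (n j') := rfl
          rw [hv] at hsm
          rw [hWdef, le_div_iff₀ h4KPpos]
          linarith
        have hWnn : 0 ≤ W := by
          rw [hWdef]
          apply div_nonneg _ h4KPpos.le
          have : (0:ℝ) ≤ ((V:ℤ):ℝ) := by linarith
          exact mul_nonneg hEpos.le this
        set SI : ℝ := ∑ i ∈ I, ((a (m i) : ℤ):ℝ) with hSIdef
        set SJ : ℝ := ∑ j' ∈ J, ((a (n j') : ℤ):ℝ) with hSJdef
        have hSIb : SI ≤ (k:ℝ) * W := by
          rw [hSIdef]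
          refine le_trans (Finset.sum_le_card_nsmul _ _ W htermI) ?_
          rw [nsmul_eq_mul]
          have : (I.card : ℝ) ≤ (k : ℝ) := by
            exact_mod_cast le_trans (Finset.card_le_univ _) (le_of_eq (by simp))
          exact mul_le_mul_of_nonneg_right this hWnn
        have hSJb : SJ ≤ (l:ℝ) * W := by
          rw [hSJdef]
          refine le_trans (Finset.sum_le_card_nsmul _ _ W htermJ) ?_
          rw [nsmul_eq_mul]
          have : (J.card : ℝ) ≤ (l : ℝ) := by
            exact_mod_cast le_trans (Finset.card_le_univ _) (le_of_eq (by simp))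
          exact mul_le_mul_of_nonneg_right this hWnn
        have hKW : (k:ℝ) * W + (l:ℝ) * W = (K:ℝ) * W := by rw [hK]; push_cast; ring
        have hKWval : (K:ℝ) * W = ε (ρ j0) * ((V:ℤ):ℝ) / (4 * ρ j0) := by
          rw [hWdef]
          have hKne : (K:ℝ) ≠ 0 := by linarith
          have hPne : ρ j0 ≠ 0 := by linarith
          field_simp
        have hSsum : SI + SJ ≤ ε (ρ j0) * ((V:ℤ):ℝ) / (4 * ρ j0) := by
          linarith
        have hSInn : 0 ≤ SI := Finset.sum_nonneg (fun i _ => by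
          have := ha1 (m i); positivity)
        have hSJnn : 0 ≤ SJ := Finset.sum_nonneg (fun j' _ => by
          have := ha1 (n j'); positivity)
        have hs'ub : |(s':ℝ)| ≤ |(r:ℝ)| + (SI + SJ) := by
          have hval' : (s':ℝ) = SJ - SI - (r:ℝ) := by
            rw [hs'def, hSIdef, hSJdef]
            push_cast
            ring
          rw [hval', abs_le]
          have h1 : (r:ℝ) ≤ |(r:ℝ)| := le_abs_self _
          have h2 : -(|(r:ℝ)|) ≤ (r:ℝ) := neg_abs_le _
          constructor <;> linarith
        -- combine everything
        have hint1 := mul_le_mul_of_nonneg_left hs'low hPnn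
        have hint2 := mul_le_mul_of_nonneg_left hs'ub hPnn
        have hint3 := mul_le_mul_of_nonneg_left hφlb hEpos.le
        have hint4 := mul_le_mul_of_nonneg_left hSsum hPnn
        have hPdiv : ρ j0 * (ε (ρ j0) * ((V:ℤ):ℝ) / (4 * ρ j0))
            = ε (ρ j0) * ((V:ℤ):ℝ) / 4 := by
          have hPne : ρ j0 ≠ 0 := by linarith
          field_simp
        have hPCnn : (0:ℝ) ≤ ρ j0 * C := mul_nonneg hPnn hC0
        have hint5 : ε (ρ j0) * (ρ j0 * C) ≤ ρ j0 * C :=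
          le_trans (mul_le_mul_of_nonneg_right hEle hPCnn) (by rw [one_mul])
        have hKnn : (0:ℝ) ≤ (K:ℝ) := by linarith
        have hstep1 : ε (ρ j0) * ((V:ℤ):ℝ)
            ≤ 2 * ρ j0 * ((|r| : ℝ) + C + (K:ℝ) * C + 1) := by
          linarith [hint1, hint2, hint3, hint4, hint5, hPdiv, hPnn, hC0, hrabs,
            mul_nonneg hPnn hrabs, mul_nonneg hPnn hC0,
            mul_nonneg (mul_nonneg hPnn hKnn) hC0]
        have hVle : ((V:ℤ):ℝ) ≤ 2 * ρ j0 * ((|r| : ℝ) + C + (K:ℝ) * C + 1) / ε (ρ j0) := by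
          rw [le_div_iff₀ hEpos]
          linarith [hstep1]
        have hVu : ((V:ℤ):ℝ) ≤ u j0 := by
          rw [hudef]
          simp only
          have h2PCnn : (0:ℝ) ≤ 2 * ρ j0 * C := by linarith
          linarith
        linarith
end

section
/- Let A ⊆ ℤ⁺ be infinite and geometrically sparse, with strictly increasing enumeration (a_n)_{n=0}^∞. Then for any integers k, l ≥ 1 and r ∈ ℤ there exist s, t ≥ 0 such that for any (m̄,n̄) ∈ A(k,l,r), if max(m̄,n̄) − min(m̄,n̄) > t (maximum and minimum taken over all coordinates of both tuples), then (m̄,n̄) ∈ A(k,l,r,s). -/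
open Filter Pointwise

/-!
Let `f` witness the geometric sparseness of `A` and put `S = f(A)`. As the ratio set of `S` is
closed and discrete, its elements `ρ > 1` are bounded below by some `λ > 1`, so `f(a_q)` grows
geometrically along indices spaced by a fixed gap; and only finitely many ratios lie in any
`[1, X]`.

Let `F` be the largest of the values `f(a_{m_i})`, `f(a_{n_j})`. A large spread makes both `F` and
`F / f(a_{min})` large. Among `N + 1` nested scales `X_0 < ⋯ < X_{N+1}` (`N = k + l`) pigeonhole one
with no value in `(F / X_{j+1}, F / X_j]`. The values above this gap are `F / ρ` with `ρ ∈ [1, X_j]`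
a ratio, so their signed sum divided by `F` lies in a finite set; it is also small, since the
relation holds up to a bounded error and the values below the gap are tiny, hence it is `0`.
Splitting the tuples at the gap gives the decomposition, with `|s'| ≤ (k + l) sup |a - f(a)|`.
-/

open Finset Set Function

theorem Set.Finite.exists_pos_forall_eq_of_dist_lt {X : Type*} [MetricSpace X] {V : Set X}
    (hV : V.Finite) (x : X) : ∃ δ > 0, ∀ v ∈ V, dist v x < δ → v = x := by
  obtain ⟨δ, hδ, hball⟩ :=
    Metric.isOpen_iff.1 (hV.sdiff (t := {x})).isClosed.isOpen_compl x (by simp)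
  exact ⟨δ, hδ, fun v hv hvx => by_contra fun hne => hball (Metric.mem_ball.2 hvx) ⟨hv, hne⟩⟩

theorem exists_le_forall_notMem_of_pairwise_disjoint {ι α : Type*} [Fintype ι] {N : ℕ}
    (hN : Fintype.card ι ≤ N) {U : ℕ → Set α} (hU : Pairwise (Disjoint on U)) (g : ι → α) :
    ∃ j ≤ N, ∀ p, g p ∉ U j := by
  by_contra! h
  choose p hp using fun j : Fin (N + 1) => h j (Nat.lt_succ_iff.1 j.2)
  have hp_inj : Injective p := fun i j hij =>
    Fin.ext (hU.eq (not_disjoint_iff.2 ⟨g (p i), hp i, hij ▸ hp j⟩))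
  simpa using (Fintype.card_le_of_injective p hp_inj).trans hN

theorem StrictMono.add_le_apply_add {a : ℕ → ℤ} (ha : StrictMono a) (p n : ℕ) :
    a p + n ≤ a (p + n) := by
  induction n with
  | zero => simp
  | succ n ih =>
    have : a (p + n) < a (p + n + 1) := ha (Nat.lt_add_one _)
    rw [← add_assoc]
    push_cast
    omega

theorem exists_mem_add_lt_of_lt_sSup_sub_sInf {U : Set ℕ} {t : ℕ}
    (h : t < sSup U - sInf U) : ∃ p ∈ U, ∃ q ∈ U, p + t < q := by
  have hne : U.Nonempty := by
    by_contra! hU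
    simp [hU] at h
  have hbdd : BddAbove U := by
    by_contra hU
    simp [Nat.sSup_of_not_bddAbove hU] at h
  exact ⟨_, Nat.sInf_mem hne, _, Nat.sSup_mem hne hbdd, by omega⟩

theorem pow_succ_mul_le_of_forall_add_le {g : ℕ → ℝ} {lam : ℝ} {D : ℕ} (hlam : 0 ≤ lam)
    (h : ∀ p q, p + D ≤ q → lam * g p ≤ g q) :
    ∀ d p q, p + D * (d + 1) ≤ q → lam ^ (d + 1) * g p ≤ g q
  | 0, p, q, hpq => by simpa using h p q (by simpa using hpq)
  | d + 1, p, q, hpq =>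
    calc lam ^ (d + 1 + 1) * g p = lam ^ (d + 1) * (lam * g p) := by ring
      _ ≤ lam ^ (d + 1) * g (p + D) := by gcongr; exact h _ _ le_rfl
      _ ≤ g q := pow_succ_mul_le_of_forall_add_le hlam h d _ _ (by linarith [mul_add_one D (d + 1)])

theorem exists_seq_one_le_forall_le_succ (φ : ℝ → ℝ) :
    ∃ X : ℕ → ℝ, (∀ j, 1 ≤ X j) ∧ ∀ j, X j + 1 ≤ X (j + 1) ∧ φ (X j) ≤ X (j + 1) := by
  let X : ℕ → ℝ := fun j => Nat.rec 1 (fun _ Xj => max (Xj + 1) (φ Xj)) j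
  have hXsucc (j : ℕ) : X j + 1 ≤ X (j + 1) ∧ φ (X j) ≤ X (j + 1) :=
    max_le_iff.1 le_rfl
  refine ⟨X, fun j => ?_, hXsucc⟩
  induction j with
  | zero => exact le_rfl
  | succ j ih => linarith [(hXsucc j).1]

section FiniteSums

variable {α β : Type*} [Fintype α] [Fintype β]

theorem abs_sum_le_card_mul {w : α → ℝ} {C : ℝ} (hC : 0 ≤ C) (hw : ∀ i, |w i| ≤ C)
    (B : Finset α) : |∑ i ∈ B, w i| ≤ Fintype.card α * C :=
  calc |∑ i ∈ B, w i| ≤ ∑ i ∈ B, |w i| := abs_sum_le_sum_abs _ _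
    _ ≤ #B • C := sum_le_card_nsmul _ _ _ fun i _ => hw i
    _ ≤ Fintype.card α * C := by rw [nsmul_eq_mul]; gcongr; exact card_le_univ B

theorem abs_sum_sub_sum_sub_le {u x : α → ℝ} {v y : β → ℝ} {C : ℝ} (hC : 0 ≤ C)
    (hux : ∀ i, |u i - x i| ≤ C) (hvy : ∀ j, |v j - y j| ≤ C) (B : Finset α) (B' : Finset β) :
    |(∑ i ∈ B, u i - ∑ j ∈ B', v j) - (∑ i ∈ B, x i - ∑ j ∈ B', y j)| ≤
      (Fintype.card α + Fintype.card β) * C := by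
  have hsplit : (∑ i ∈ B, u i - ∑ j ∈ B', v j) - (∑ i ∈ B, x i - ∑ j ∈ B', y j) =
      ∑ i ∈ B, (u i - x i) - ∑ j ∈ B', (v j - y j) := by
    simp only [sum_sub_distrib]; ring
  rw [hsplit, add_mul]
  exact (abs_sub _ _).trans
    (add_le_add (abs_sum_le_card_mul hC hux B) (abs_sum_le_card_mul hC hvy B'))

theorem abs_sum_sub_sum_le_of_add_sum_eq {u : α → ℤ} {v : β → ℤ} {x : α → ℝ} {y : β → ℝ}
    {C : ℝ} {r : ℤ} (hC : 0 ≤ C) (hux : ∀ i, |(u i : ℝ) - x i| ≤ C)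
    (hvy : ∀ j, |(v j : ℝ) - y j| ≤ C) (h : r + ∑ i, u i = ∑ j, v j) :
    |∑ i, x i - ∑ j, y j| ≤ |(r : ℝ)| + (Fintype.card α + Fintype.card β) * C := by
  have hr : ∑ i, (u i : ℝ) - ∑ j, (v j : ℝ) = -r := by
    have := congrArg (Int.cast : ℤ → ℝ) h
    push_cast at this
    linarith
  have hshift := abs_sum_sub_sum_sub_le hC hux hvy univ univ
  rw [hr, abs_sub_comm, sub_neg_eq_add] at hshift
  have := abs_sub (∑ i, x i - ∑ j, y j + r) r
  rw [add_sub_cancel_right] at this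
  linarith

theorem abs_sum_sub_sum_le_ceil_of_sum_eq {u : α → ℤ} {v : β → ℤ} {x : α → ℝ} {y : β → ℝ}
    {C : ℝ} (hC : 0 ≤ C) (hux : ∀ i, |(u i : ℝ) - x i| ≤ C) (hvy : ∀ j, |(v j : ℝ) - y j| ≤ C)
    {B : Finset α} {B' : Finset β} (h : ∑ i ∈ B, x i = ∑ j ∈ B', y j) :
    |∑ i ∈ B, u i - ∑ j ∈ B', v j| ≤ ⌈(Fintype.card α + Fintype.card β) * C⌉₊ := by
  have := abs_sum_sub_sum_sub_le hC hux hvy B B'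
  rw [h, sub_self, sub_zero] at this
  exact_mod_cast this.trans (Nat.le_ceil _)

theorem sum_filter_not_lt_le {x : α → ℝ} {θ : ℝ} (hθ : 0 ≤ θ) :
    ∑ i with ¬θ < x i, x i ≤ Fintype.card α * θ :=
  calc ∑ i with ¬θ < x i, x i ≤ #{i | ¬θ < x i} • θ :=
        sum_le_card_nsmul _ _ _ fun i hi => not_lt.1 (mem_filter.1 hi).2
    _ ≤ Fintype.card α * θ := by rw [nsmul_eq_mul]; gcongr; exact card_le_univ _

theorem zero_lt_sum_filter_iff {x : α → ℝ} (hx : ∀ i, 0 < x i) (θ : ℝ) :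
    0 < ∑ i with θ < x i, x i ↔ ∃ i, θ < x i := by
  rw [sum_pos_iff_of_nonneg fun i _ => (hx i).le]
  simp [hx]

theorem exists_lt_and_exists_lt_of_sum_filter_eq {x : α → ℝ} {y : β → ℝ} (hx : ∀ i, 0 < x i)
    (hy : ∀ j, 0 < y j) {θ w : ℝ} (hw : w ∈ range x ∪ range y) (hθw : θ < w)
    (h : ∑ i with θ < x i, x i = ∑ j with θ < y j, y j) : (∃ i, θ < x i) ∧ ∃ j, θ < y j := by
  have hiff : (∃ i, θ < x i) ↔ ∃ j, θ < y j := by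
    rw [← zero_lt_sum_filter_iff hx, h, zero_lt_sum_filter_iff hy]
  obtain ⟨i, rfl⟩ | ⟨j, rfl⟩ := hw
  exacts [⟨⟨i, hθw⟩, hiff.1 ⟨i, hθw⟩⟩, ⟨hiff.2 ⟨j, hθw⟩, ⟨j, hθw⟩⟩]

end FiniteSums

-- `IsGeometric S` says exactly that `ratioSet S` is closed and discrete.
def ratioSet (S : Set ℝ) : Set ℝ := {x | ∃ s ∈ S, ∃ t ∈ S, t ≤ s ∧ x = s / t}

/-- The possible values of `s / F` for `s, F ∈ S` with `F / X < s ≤ F`, and `0` for a discarded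
summand. -/
def invRatios (S : Set ℝ) (X : ℝ) : Set ℝ := insert 0 ((·⁻¹) '' (ratioSet S ∩ Icc 1 X))

def signedSums (α β : Type*) [Fintype α] [Fintype β] (T : Set ℝ) : Set ℝ :=
  image2 (fun (c : α → ℝ) (c' : β → ℝ) => ∑ i, c i - ∑ j, c' j)
    (univ.pi fun _ => T) (univ.pi fun _ => T)

theorem finite_signedSums (α β : Type*) [Fintype α] [Fintype β] {T : Set ℝ} (hT : T.Finite) :
    (signedSums α β T).Finite :=
  (Set.Finite.pi fun _ => hT).image2 _ (Set.Finite.pi fun _ => hT)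

namespace IsGeometric

variable {S : Set ℝ}

theorem finite_ratioSet_inter_Icc (hS : IsGeometric S) (X : ℝ) :
    (ratioSet S ∩ Icc 1 X).Finite := by
  have : DiscreteTopology ↥(ratioSet S ∩ Icc 1 X) :=
    DiscreteTopology.of_subset hS.2 inter_subset_left
  exact (isCompact_Icc.inter_left hS.1).finite (isDiscrete_iff_discreteTopology.mpr this)

theorem finite_invRatios (hS : IsGeometric S) (X : ℝ) : (invRatios S X).Finite :=
  ((hS.finite_ratioSet_inter_Icc X).image _).insert 0

theorem exists_one_lt_forall_mul_le (hS : IsGeometric S) (hS0 : ∀ s ∈ S, 0 < s) :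
    ∃ lam > 1, ∀ s ∈ S, ∀ t ∈ S, t < s → lam * t ≤ s := by
  obtain ⟨δ, hδ, hiso⟩ := (hS.finite_ratioSet_inter_Icc 2).exists_pos_forall_eq_of_dist_lt 1
  refine ⟨1 + min δ 1, by simp [hδ], fun s hs t ht hts => ?_⟩
  have ht0 := hS0 t ht
  rw [← le_div_iff₀ ht0]
  have hρ1 : 1 < s / t := (one_lt_div ht0).2 hts
  by_cases hρ2 : s / t ≤ 2
  · have hfar : ¬dist (s / t) 1 < δ := fun h =>
      hρ1.ne' (hiso _ ⟨⟨s, hs, t, ht, hts.le, rfl⟩, hρ1.le, hρ2⟩ h)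
    rw [Real.dist_eq, abs_of_pos (by linarith), not_lt] at hfar
    linarith [min_le_left δ 1]
  · linarith [min_le_right δ 1]

end IsGeometric

theorem div_mem_invRatios {S : Set ℝ} {F s X : ℝ} (hF : F ∈ S) (hs : s ∈ S) (hs0 : 0 < s)
    (hsF : s ≤ F) (hX : 0 < X) (hXs : F / X < s) : s / F ∈ invRatios S X := by
  refine Or.inr ⟨F / s, ⟨⟨F, hF, s, hs, hsF, rfl⟩, (one_le_div hs0).2 hsF, ?_⟩, inv_div F s⟩
  rw [div_lt_iff₀ hX] at hXs
  rw [div_le_iff₀ hs0]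
  linarith

theorem sum_filter_eq_of_forall_notMem_Ioc {S : Set ℝ} {α β : Type*} [Fintype α] [Fintype β]
    (hS0 : ∀ s ∈ S, 0 < s) {x : α → ℝ} {y : β → ℝ}
    (hx : ∀ i, x i ∈ S) (hy : ∀ j, y j ∈ S) {F X θ C₁ δ : ℝ}
    (hF : IsGreatest (range x ∪ range y) F) (hX : 0 < X) (hθ : 0 ≤ θ)
    (hgapx : ∀ i, x i ∉ Ioc θ (F / X)) (hgapy : ∀ j, y j ∉ Ioc θ (F / X))
    (hδ : ∀ v ∈ signedSums α β (invRatios S X), |v| < δ → v = 0)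
    (hsum : |∑ i, x i - ∑ j, y j| ≤ C₁)
    (hsmall : C₁ + (Fintype.card α + Fintype.card β) * θ < δ * F) :
    ∑ i with θ < x i, x i = ∑ j with θ < y j, y j := by
  have hFS : F ∈ S := by
    obtain ⟨i, rfl⟩ | ⟨j, rfl⟩ := hF.1
    exacts [hx i, hy j]
  have hF0 := hS0 F hFS
  have hmem {s : ℝ} (hs : s ∈ S) (hsF : s ≤ F) (hgap : s ∉ Ioc θ (F / X)) :
      (if θ < s then s / F else 0) ∈ invRatios S X := by
    split_ifs with h
    · exact div_mem_invRatios hFS hs (hS0 s hs) hsF hX (lt_of_not_ge fun h' => hgap ⟨h, h'⟩)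
    · exact mem_insert 0 _
  have hv : (∑ i with θ < x i, x i - ∑ j with θ < y j, y j) / F ∈
      signedSums α β (invRatios S X) :=
    ⟨_, fun i _ => hmem (hx i) (hF.2 (Or.inl ⟨i, rfl⟩)) (hgapx i),
      _, fun j _ => hmem (hy j) (hF.2 (Or.inr ⟨j, rfl⟩)) (hgapy j),
      by simp only [sum_filter, sub_div, sum_div, ite_div, zero_div]⟩
  have hbig : |∑ i with θ < x i, x i - ∑ j with θ < y j, y j| < δ * F := by
    have hx' := sum_filter_add_sum_filter_not univ (fun i => θ < x i) x
    have hy' := sum_filter_add_sum_filter_not univ (fun j => θ < y j) y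
    have hx0 : 0 ≤ ∑ i with ¬θ < x i, x i := sum_nonneg fun i _ => (hS0 _ (hx i)).le
    have hy0 : 0 ≤ ∑ j with ¬θ < y j, y j := sum_nonneg fun j _ => (hS0 _ (hy j)).le
    have hxθ := sum_filter_not_lt_le (x := x) hθ
    have hyθ := sum_filter_not_lt_le (x := y) hθ
    rw [abs_le] at hsum
    rw [abs_lt]
    constructor <;> nlinarith
  have hzero := hδ _ hv (by rwa [abs_div, abs_of_pos hF0, div_lt_iff₀ hF0])
  rwa [div_eq_zero_iff, sub_eq_zero, or_iff_left hF0.ne'] at hzero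

theorem IsGeometric.exists_threshold_sum_filter_eq {S : Set ℝ} (hS : IsGeometric S)
    (hS0 : ∀ s ∈ S, 0 < s) (α β : Type*) [Fintype α] [Fintype β] (C₁ : ℝ) :
    ∃ K : ℝ, ∀ (x : α → ℝ) (y : β → ℝ), (∀ i, x i ∈ S) → (∀ j, y j ∈ S) →
      |∑ i, x i - ∑ j, y j| ≤ C₁ → ∀ z ∈ range x ∪ range y, ∀ w ∈ range x ∪ range y,
      K ≤ w → K * z ≤ w →
      ∃ θ, z ≤ θ ∧ (∃ i, θ < x i) ∧ (∃ j, θ < y j) ∧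
        ∑ i with θ < x i, x i = ∑ j with θ < y j, y j := by
  set N := Fintype.card α + Fintype.card β
  choose δ hδ0 hδ using fun X =>
    (finite_signedSums α β (hS.finite_invRatios X)).exists_pos_forall_eq_of_dist_lt 0
  -- `N / X (j + 1) ≤ δ (X j) / 4`: at scale `j` the summands below `F / X (j + 1)` are negligible
  obtain ⟨X, hX1, hXsucc⟩ := exists_seq_one_le_forall_le_succ fun X => 4 * N / δ X
  have hXmono : Monotone X := monotone_nat_of_le_succ fun j => by linarith [(hXsucc j).1]
  obtain ⟨K, hK⟩ := ((finite_Iic (N + 1)).image fun j => max (X j) (4 * |C₁| / δ (X j))).bddAbove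
  have hKX {j : ℕ} (hj : j ≤ N + 1) : X j ≤ K ∧ 4 * |C₁| / δ (X j) ≤ K :=
    max_le_iff.1 (hK ⟨j, hj, rfl⟩)
  refine ⟨K, fun x y hx hy hsum z hz w hw hKw hKzw => ?_⟩
  obtain ⟨F, hF⟩ : ∃ F, IsGreatest (range x ∪ range y) F :=
    ⟨_, ((finite_range x).union (finite_range y)).isCompact.isGreatest_sSup ⟨w, hw⟩⟩
  have hKF := hKw.trans (hF.2 hw)
  have hKz := hKzw.trans (hF.2 hw)
  have hpos : ∀ w ∈ range x ∪ range y, 0 < w := by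
    rintro _ (⟨i, rfl⟩ | ⟨j, rfl⟩)
    exacts [hS0 _ (hx i), hS0 _ (hy j)]
  have hF0 := hpos F hF.1
  have hXpos (j : ℕ) : 0 < X j := zero_lt_one.trans_le (hX1 j)
  have hdisj : Pairwise (Disjoint on fun j => Ioc (F / X (j + 1)) (F / X j)) :=
    Antitone.pairwise_disjoint_on_Ioc_succ fun i j hij =>
      div_le_div_of_nonneg_left hF0.le (hXpos i) (hXmono hij)
  obtain ⟨j, hjN, hj⟩ :=
    exists_le_forall_notMem_of_pairwise_disjoint (N := N) (by simp [N]) hdisj (Sum.elim x y)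
  have hδj : (Fintype.card α + Fintype.card β) * (F / X (j + 1)) ≤ δ (X j) * F / 4 := by
    have h := (hXsucc j).2
    rw [div_le_iff₀ (hδ0 _)] at h
    rw [mul_div_assoc', div_le_div_iff₀ (hXpos _) (by norm_num : (0 : ℝ) < 4)]
    push_cast [N] at h
    nlinarith
  have hC₁ : C₁ ≤ δ (X j) * F / 4 := by
    have h := (hKX (j := j) (by omega)).2.trans hKF
    rw [div_le_iff₀ (hδ0 _)] at h
    linarith [le_abs_self C₁]
  have hsumθ := sum_filter_eq_of_forall_notMem_Ioc (θ := F / X (j + 1)) hS0 hx hy hF (hXpos j)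
    (div_nonneg hF0.le (hXpos (j + 1)).le) (fun i => hj (.inl i)) (fun i => hj (.inr i))
    (fun v hv hvδ => hδ _ v hv (by rwa [Real.dist_0_eq_abs])) hsum
    (by linarith [mul_pos (hδ0 (X j)) hF0])
  have hzθ : z ≤ F / X (j + 1) := by
    rw [le_div_iff₀ (hXpos _)]
    nlinarith [hXmono (show j + 1 ≤ N + 1 by omega), (hKX le_rfl).1, hpos z hz]
  have hθF : F / X (j + 1) < F := div_lt_self hF0 (by linarith [(hXsucc j).1, hX1 j])
  obtain ⟨hxθ, hyθ⟩ := exists_lt_and_exists_lt_of_sum_filter_eq (fun i => hS0 _ (hx i))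
    (fun j => hS0 _ (hy j)) hF.1 hθF hsumθ
  exact ⟨_, hzθ, hxθ, hyθ, hsumθ⟩

theorem exists_forall_add_lt_mul_le {S : Set ℝ} {lam C : ℝ} (hlam : 1 < lam)
    (hS : ∀ s ∈ S, ∀ t ∈ S, t < s → lam * t ≤ s) {a : ℕ → ℤ} (ha : StrictMono a) {g : ℕ → ℝ}
    (hgS : ∀ q, g q ∈ S) (hg0 : ∀ q, 0 < g q) (hC : ∀ q, |(a q : ℝ) - g q| ≤ C) (K : ℝ) :
    ∃ t : ℕ, ∀ p q, p + t < q → K ≤ g q ∧ K * g p ≤ g q := by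
  have hga (q : ℕ) := abs_le.1 (hC q)
  set D := ⌈2 * C⌉₊ + 1
  have hstep (p q : ℕ) (hpq : p + D ≤ q) : lam * g p ≤ g q := by
    refine hS _ (hgS q) _ (hgS p) ?_
    have hD : (a p : ℝ) + D ≤ a q := by
      exact_mod_cast (ha.add_le_apply_add p D).trans (ha.monotone hpq)
    have h2C : 2 * C < D := by
      simp only [D]; push_cast; linarith [Nat.le_ceil (2 * C)]
    linarith [hga p, hga q]
  obtain ⟨d, hd⟩ := pow_unbounded_of_one_lt K hlam
  refine ⟨D * (d + 1) + ⌈K + C - a 0⌉₊, fun p q hpq => ⟨?_, ?_⟩⟩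
  · have h0q : (a 0 : ℝ) + q ≤ a q := by exact_mod_cast zero_add q ▸ ha.add_le_apply_add 0 q
    have hq : K + C - a 0 ≤ q := (Nat.le_ceil _).trans (by exact_mod_cast (by omega : _ ≤ q))
    linarith [hga q]
  · calc K * g p ≤ lam ^ (d + 1) * g p := by
          gcongr
          · exact (hg0 p).le
          · exact hd.le.trans (pow_le_pow_right₀ hlam.le d.le_succ)
      _ ≤ g q := pow_succ_mul_le_of_forall_add_le (by linarith) hstep d p q (by omega)

theorem inRelS_of_abs_sum_sub_sum_le {a : ℕ → ℤ} {k l : ℕ} {r s : ℤ} {m : Fin k → ℕ}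
    {n : Fin l → ℕ} (h : inRel a r m n) {B : Finset (Fin k)} {B' : Finset (Fin l)}
    (hB : B.Nonempty) (hB' : B'.Nonempty) (hBB' : Bᶜ.Nonempty ∨ B'ᶜ.Nonempty)
    (hs : |∑ i ∈ B, a (m i) - ∑ j ∈ B', a (n j)| ≤ s) : inRelS a r s m n := by
  refine ⟨_, hs, Bᶜ, B'ᶜ, ?_, ?_, hBB', ?_, ?_⟩
  · simpa [compl_eq_univ_iff] using hB.ne_empty
  · simpa [compl_eq_univ_iff] using hB'.ne_empty
  · have := sum_compl_add_sum B fun i => a (m i)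
    have := sum_compl_add_sum B' fun j => a (n j)
    unfold inRel at h
    linarith
  · rw [compl_compl, compl_compl]
    ring

theorem inRelS_of_large_spread_general (A : Set ℤ) (hGS : GeomSparse A)
    (a : ℕ → ℤ) (ha : StrictMono a) (hrange : Set.range a = A)
    (k l : ℕ) (r : ℤ) :
    ∃ s t : ℕ, ∀ (m : Fin k → ℕ) (n : Fin l → ℕ), inRel a r m n →
      t < sSup (Set.range m ∪ Set.range n) - sInf (Set.range m ∪ Set.range n) →
      inRelS a r (s : ℤ) m n := by
  obtain ⟨f, hf0, hS, C, hC⟩ := hGS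
  have hS0 : ∀ s ∈ f '' A, 0 < s := by
    rintro _ ⟨x, hx, rfl⟩
    exact hf0 x hx
  have haA (q : ℕ) : a q ∈ A := hrange ▸ mem_range_self q
  have hfaS (q : ℕ) : f (a q) ∈ f '' A := mem_image_of_mem f (haA q)
  have hC0 : 0 ≤ C := (abs_nonneg _).trans (hC _ (haA 0))
  obtain ⟨lam, hlam, hgap⟩ := hS.exists_one_lt_forall_mul_le hS0
  obtain ⟨K, hK⟩ := hS.exists_threshold_sum_filter_eq hS0 (Fin k) (Fin l) (|(r : ℝ)| + (k + l) * C)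
  obtain ⟨t, ht⟩ := exists_forall_add_lt_mul_le hlam hgap ha hfaS (fun q => hS0 _ (hfaS q))
    (fun q => hC _ (haA q)) K
  refine ⟨⌈(k + l) * C⌉₊, t, fun m n hrel hspread => ?_⟩
  obtain ⟨p, hp, q, hq, hpq⟩ := exists_mem_add_lt_of_lt_sSup_sub_sInf hspread
  set x : Fin k → ℝ := fun i => f (a (m i))
  set y : Fin l → ℝ := fun j => f (a (n j))
  have hxy {p : ℕ} : p ∈ range m ∪ range n → f (a p) ∈ range x ∪ range y := by
    rintro (⟨i, rfl⟩ | ⟨j, rfl⟩)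
    exacts [Or.inl ⟨i, rfl⟩, Or.inr ⟨j, rfl⟩]
  have hsum : |∑ i, x i - ∑ j, y j| ≤ |(r : ℝ)| + (k + l) * C := by
    have := abs_sum_sub_sum_le_of_add_sum_eq (x := x) (y := y) hC0 (fun i => hC _ (haA _))
      (fun j => hC _ (haA _)) hrel
    simpa using this
  obtain ⟨θ, hpθ, ⟨i, hi⟩, ⟨j, hj⟩, hθ⟩ := hK x y (fun i => hfaS _) (fun j => hfaS _) hsum
    _ (hxy hp) _ (hxy hq) (ht p q hpq).1 (ht p q hpq).2
  refine inRelS_of_abs_sum_sub_sum_le hrel (B := {i | θ < x i}) (B' := {j | θ < y j})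
    ⟨i, by simpa using hi⟩ ⟨j, by simpa using hj⟩ ?_ ?_
  · obtain ⟨i, rfl⟩ | ⟨j, rfl⟩ := hp
    exacts [Or.inl ⟨i, by simpa [x] using hpθ⟩, Or.inr ⟨j, by simpa [y] using hpθ⟩]
  · have := abs_sum_sub_sum_le_ceil_of_sum_eq (u := fun i => a (m i)) (v := fun j => a (n j))
      hC0 (fun i => hC _ (haA _)) (fun j => hC _ (haA _)) hθ
    simpa using this

/-- For `A ⊆ ℤ⁺` infinite and geometrically sparse with strictly increasing
enumeration `(a_n)`, and `k, l ≥ 1`, `r ∈ ℤ`, there are `s, t ≥ 0` such that any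
`(m̄,n̄) ∈ A(k,l,r)` with `max(m̄,n̄) − min(m̄,n̄) > t` lies in `A(k,l,r,s)`. -/
theorem inRelS_of_large_spread (A : Set ℤ) (hApos : ∀ x ∈ A, 0 < x) (hGS : GeomSparse A)
    (a : ℕ → ℤ) (ha : StrictMono a) (hrange : Set.range a = A)
    (k l : ℕ) (hk : 1 ≤ k) (hl : 1 ≤ l) (r : ℤ) :
    ∃ s t : ℕ, ∀ (m : Fin k → ℕ) (n : Fin l → ℕ), inRel a r m n →
      t < sSup (Set.range m ∪ Set.range n) - sInf (Set.range m ∪ Set.range n) →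
      inRelS a r (s : ℤ) m n :=
  inRelS_of_large_spread_general A hGS a ha hrange k l r
end

section
/- Let A ⊆ ℤ. If A strongly contains arbitrarily long arithmetic progressions, then for every k ≥ 1 there exist integers b_1, …, b_k and c_1, …, c_k such that for all 1 ≤ i, j ≤ k, one has c_j − b_i ∈ A if and only if i ≤ j. -/
open Filter Pointwise

def StronglyContainsAP (A : Set ℤ) (a d : ℤ) (n : ℕ) : Prop :=
  (∀ i : ℕ, i < n → a + i * d ∈ A) ∧ ∀ i : ℕ, 1 ≤ i → i < n → a - i * d ∉ A

theorem StronglyContainsAP.add_mul_mem_iff {A : Set ℤ} {a d : ℤ} {n : ℕ}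
    (hA : StronglyContainsAP A a d n) {m : ℤ} (hlo : -n < m) (hhi : m < n) :
    a + m * d ∈ A ↔ 0 ≤ m := by
  rcases le_or_gt 0 m with hm | hm
  · lift m to ℕ using hm
    exact iff_of_true (hA.1 m (by exact_mod_cast hhi)) (Int.natCast_nonneg m)
  · obtain ⟨i, rfl⟩ : ∃ i : ℕ, m = -i := ⟨m.natAbs, by omega⟩
    have hout := hA.2 i (by omega) (by omega)
    rw [neg_mul, ← sub_eq_add_neg]
    exact iff_of_false hout hm.not_ge

/-- If `A ⊆ ℤ` strongly contains arbitrarily long arithmetic progressions,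
then for every `k ≥ 1` there are `b_1,…,b_k, c_1,…,c_k ∈ ℤ` such that `c_j − b_i ∈ A` iff
`i ≤ j` (i.e. the formula `y − x ∈ A` has the order property). -/
theorem order_property_of_strong_ap (A : Set ℤ)
    (h : ∀ N : ℕ, ∃ a d : ℤ, 1 ≤ d ∧ (∀ i : ℕ, i < N → a + i * d ∈ A) ∧
      ∀ i : ℕ, 1 ≤ i → i < N → a - i * d ∉ A) :
    ∀ k : ℕ, 1 ≤ k → ∃ b c : Fin k → ℤ,
      ∀ i j : Fin k, (c j - b i ∈ A ↔ i ≤ j) := by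
  intro k _
  obtain ⟨a, d, -, hA⟩ := h k
  replace hA : StronglyContainsAP A a d k := hA
  refine ⟨fun i => i * d, fun j => a + j * d, fun i j => ?_⟩
  have hdiff : a + j * d - i * d = a + ((j : ℤ) - i) * d := by ring
  rw [hdiff, hA.add_mul_mem_iff (by omega) (by omega), sub_nonneg, Nat.cast_le, Fin.val_fin_le]
end

section
/- Let A ⊆ ℕ and suppose that for every n ≥ 1 the sumset Σ_n(A) does not strongly contain arbitrarily long arithmetic progressions (i.e. A is ap*-sparse). Then A is δ̲-sparse: for every n ≥ 1, the lower asymptotic density of Σ_n(A) is 0. -/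
/-!
Suppose `S = Σ_n(A)` has positive lower density and fix `s₀ ∈ S`; then `C = {c | s₀ + c ∈ S}`
has positive lower density too. If `g` is the least positive difference of two elements of the
additive monoid generated by `C`, division with remainder shows that `g` divides every element
of `C`, and some iterated sumset `m • (C / g)` contains two consecutive integers `q, q + 1`.
Hence `K • m • (C / g)` contains the interval `[K q, K q + K]`, so adjoining `[0, K]` to `C / g`
costs only a shift. For `K` large, `C / g ∪ [0, K]` has positive Schnirelmann density, so by
Schnirelmann's theorem one of its iterated sumsets is all of `ℕ`. Undoing the shift, the division
by `g` and the translation by `s₀`, some `M • S ⊆ Σ_{Mn}(A)` contains an infinite progression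
`e + g ℕ`; with common difference `(e + 1) g`, its initial segments are strongly contained in
`Σ_{Mn}(A)`.
-/

open Filter

/-- The `k`-fold sumset `X + ⋯ + X` (`k` times) of a set of naturals. -/
def kFoldN (X : Set ℕ) (k : ℕ) : Set ℕ :=
  {z : ℕ | ∃ f : Fin k → ℕ, (∀ i, f i ∈ X) ∧ z = ∑ i, f i}

/-- `Σ_n(X) = ⋃_{k=1}^n k(X)` for `X ⊆ ℕ`. -/
def sigmaSumN (n : ℕ) (X : Set ℕ) : Set ℕ :=
  ⋃ k ∈ Finset.Icc 1 n, kFoldN X k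

/-- `S ⊆ ℤ` strongly contains an arithmetic progression of length `N`: there are `a` and
`d ≥ 1` with `a + i·d ∈ S` for `0 ≤ i < N` and `a − i·d ∉ S` for `1 ≤ i ≤ N − 1`. -/
def StrongAPIn (S : Set ℤ) (N : ℕ) : Prop :=
  ∃ a d : ℤ, 1 ≤ d ∧ (∀ i : ℕ, i < N → a + i * d ∈ S) ∧
    ∀ i : ℕ, 1 ≤ i → i < N → a - i * d ∉ S

open Finset Pointwise
open scoped Classical

lemma kFoldN_eq_nsmul (X : Set ℕ) (k : ℕ) : kFoldN X k = k • X := by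
  ext z
  simp [kFoldN, Set.mem_nsmul_iff_sum, eq_comm]

lemma sigmaSumN_eq_iUnion (n : ℕ) (X : Set ℕ) :
    sigmaSumN n X = ⋃ k ∈ Set.Icc 1 n, k • X := by
  simp [sigmaSumN, kFoldN_eq_nsmul]

lemma sigmaSumN_add_subset (a b : ℕ) (X : Set ℕ) :
    sigmaSumN a X + sigmaSumN b X ⊆ sigmaSumN (a + b) X := by
  simp only [sigmaSumN_eq_iUnion]
  rintro _ ⟨x, hx, y, hy, rfl⟩
  simp only [Set.mem_iUnion, Set.mem_Icc, exists_prop] at hx hy ⊢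
  obtain ⟨i, hi, hxi⟩ := hx
  obtain ⟨j, hj, hyj⟩ := hy
  exact ⟨i + j, by omega, by rw [add_nsmul]; exact Set.add_mem_add hxi hyj⟩

lemma nsmul_sigmaSumN_subset {m : ℕ} (hm : m ≠ 0) (n : ℕ) (X : Set ℕ) :
    m • sigmaSumN n X ⊆ sigmaSumN (m * n) X := by
  induction m, Nat.one_le_iff_ne_zero.2 hm using Nat.le_induction with
  | base => simp
  | succ m hm ih =>
    rw [succ_nsmul, add_mul, one_mul]
    exact (Set.add_subset_add_right (ih (by omega))).trans (sigmaSumN_add_subset _ _ X)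

lemma card_filter_Ioc_eq_add (X : Set ℕ) [DecidablePred (· ∈ X)] {a n : ℕ} (h : a ≤ n) :
    #{x ∈ Ioc 0 n | x ∈ X} = #{x ∈ Ioc 0 a | x ∈ X} + #{x ∈ Ioc a n | x ∈ X} := by
  rw [← card_union_of_disjoint (disjoint_filter_filter (Ioc_disjoint_Ioc_of_le le_rfl)),
    ← filter_union, Ioc_union_Ioc_eq_Ioc (Nat.zero_le a) h]

lemma card_filter_Ioc_le_card_filter_Ioc_add {A : Set ℕ} (B : Set ℕ) [DecidablePred (· ∈ B)]
    [DecidablePred (· ∈ A + B)] {a : ℕ} (ha : a ∈ A) (n : ℕ) :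
    #{x ∈ Ioc 0 (n - a) | x ∈ B} ≤ #{x ∈ Ioc a n | x ∈ A + B} := by
  refine card_le_card_of_injOn (a + ·) (fun x hx => ?_) (fun x _ y _ h => by simpa using h)
  simp only [coe_filter, Set.mem_ofPred_eq, mem_Ioc] at hx ⊢
  exact ⟨by omega, Set.add_mem_add ha hx.2⟩

lemma le_card_filter_Ioc_add {A B : Set ℕ} [DecidablePred (· ∈ A)] [DecidablePred (· ∈ B)]
    [DecidablePred (· ∈ A + B)] (h0A : 0 ∈ A) (h0B : 0 ∈ B) {b : ℝ}
    (hB : ∀ n : ℕ, b * n ≤ #{x ∈ Ioc 0 n | x ∈ B}) (n : ℕ) :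
    #{x ∈ Ioc 0 n | x ∈ A} + b * (n - #{x ∈ Ioc 0 n | x ∈ A}) ≤
      #{x ∈ Ioc 0 n | x ∈ A + B} := by
  induction n using Nat.strong_induction_on with
  | _ n ih =>
  rcases n with _ | k
  · simp
  by_cases hk : k + 1 ∈ A
  · have hAB : k + 1 ∈ A + B := by simpa using Set.add_mem_add hk h0B
    rw [card_filter_Ioc_eq_add A (Nat.le_succ k), card_filter_Ioc_eq_add (A + B) (Nat.le_succ k),
      Nat.Ioc_succ_singleton, filter_singleton, filter_singleton, if_pos hk, if_pos hAB,
      card_singleton]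
    push_cast
    linarith [ih k (Nat.lt_succ_self k)]
  -- `(a, k + 1]` is a gap of `A`, which `a + B` fills in proportion at least `b`
  set a := Nat.findGreatest (· ∈ A) k
  have ha : a ∈ A := Nat.findGreatest_spec (Nat.zero_le k) h0A
  have hak : a ≤ k := Nat.findGreatest_le k
  have hgap : #{x ∈ Ioc a (k + 1) | x ∈ A} = 0 := by
    refine card_eq_zero.2 (filter_eq_empty_iff.2 fun x hx hxA => ?_)
    rw [mem_Ioc] at hx
    rcases hx.2.eq_or_lt with rfl | hxk
    · exact hk hxA
    · exact Nat.findGreatest_is_greatest hx.1 (by omega) hxA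
  have hfill :
      (#{x ∈ Ioc 0 (k + 1 - a) | x ∈ B} : ℝ) ≤ #{x ∈ Ioc a (k + 1) | x ∈ A + B} := by
    exact_mod_cast card_filter_Ioc_le_card_filter_Ioc_add B ha (k + 1)
  have hBgap := hB (k + 1 - a)
  rw [Nat.cast_sub (by omega)] at hBgap
  rw [card_filter_Ioc_eq_add A (Nat.le_succ_of_le hak), hgap, add_zero,
    card_filter_Ioc_eq_add (A + B) (Nat.le_succ_of_le hak)]
  push_cast at hBgap ⊢
  linarith [ih a (by omega)]

lemma le_schnirelmannDensity_add {A B : Set ℕ} [DecidablePred (· ∈ A)]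
    [DecidablePred (· ∈ B)] [DecidablePred (· ∈ A + B)] (h0A : 0 ∈ A) (h0B : 0 ∈ B) :
    schnirelmannDensity A + schnirelmannDensity B - schnirelmannDensity A * schnirelmannDensity B
      ≤ schnirelmannDensity (A + B) := by
  refine le_schnirelmannDensity_iff.2 fun n hn => (le_div_iff₀ (by positivity)).2 ?_
  have hcount := le_card_filter_Ioc_add h0A h0B (fun n => schnirelmannDensity_mul_le_card_filter) n
  have hA : schnirelmannDensity A * n ≤ #{x ∈ Ioc 0 n | x ∈ A} :=
    schnirelmannDensity_mul_le_card_filter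
  nlinarith [schnirelmannDensity_le_one (A := B)]

lemma one_sub_pow_le_schnirelmannDensity_nsmul {D : Set ℕ} [DecidablePred (· ∈ D)]
    (h0 : 0 ∈ D) (h : ℕ) :
    1 - (1 - schnirelmannDensity D) ^ h ≤ schnirelmannDensity (h • D) := by
  induction h with
  | zero => simp [schnirelmannDensity_eq_zero_of_one_notMem]
  | succ h ih =>
    rw [succ_nsmul, pow_succ]
    have := le_schnirelmannDensity_add (Set.zero_mem_nsmul h0 (n := h)) h0
    nlinarith [schnirelmannDensity_le_one (A := D)]

lemma exists_nsmul_eq_univ_of_schnirelmannDensity_pos {D : Set ℕ} [DecidablePred (· ∈ D)]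
    (h0 : 0 ∈ D) (hD : 0 < schnirelmannDensity D) : ∃ h : ℕ, h • D = Set.univ := by
  obtain ⟨h, hh⟩ := exists_pow_lt_of_lt_one (by norm_num : (0 : ℝ) < 1 / 2)
    (by linarith : 1 - schnirelmannDensity D < 1)
  refine ⟨h + h, ?_⟩
  have hhalf := one_sub_pow_le_schnirelmannDensity_nsmul h0 h
  rw [add_nsmul]
  exact add_eq_univ_of_one_le_schirelmannDensity_add_schnirelmannDensity
    (Set.zero_mem_nsmul h0) (Set.zero_mem_nsmul h0) (by linarith)

def HasPosLowerDensity (S : Set ℕ) : Prop :=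
  ∃ α > (0 : ℝ), ∀ᶠ x in atTop, α * x ≤ #{s ∈ Ioc 0 x | s ∈ S}

lemma ncard_inter_Icc_eq_card_filter (S : Set ℕ) (x : ℕ) :
    (S ∩ Set.Icc 1 x).ncard = #{s ∈ Ioc 0 x | s ∈ S} := by
  rw [← Set.ncard_coe_finset]
  congr 1
  ext s
  simp only [Set.mem_inter_iff, Set.mem_Icc, coe_filter, mem_Ioc, Set.mem_ofPred_eq]
  tauto

lemma hasPosLowerDensity_of_lowerDensity_ne_zero {S : Set ℕ} (hS : lowerDensity S ≠ 0) :
    HasPosLowerDensity S := by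
  set f : ℕ → ℝ := fun x => (S ∩ Set.Icc 1 x).ncard / x
  have hf_nonneg : ∀ x, 0 ≤ f x := fun x => by positivity
  have hf_le_one : ∀ x, f x ≤ 1 := fun x => by
    rcases x.eq_zero_or_pos with rfl | hx
    · simp [f]
    · rw [div_le_one (by exact_mod_cast hx), ncard_inter_Icc_eq_card_filter]
      exact_mod_cast (card_filter_le _ _).trans (Nat.card_Ioc 0 x).le
  have hpos : 0 < liminf f atTop :=
    (le_liminf_of_le (isBoundedUnder_of ⟨1, hf_le_one⟩).isCoboundedUnder_ge
      (Eventually.of_forall hf_nonneg)).lt_of_ne' hS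
  refine ⟨liminf f atTop / 2, by positivity, ?_⟩
  filter_upwards [eventually_lt_of_lt_liminf (half_lt_self hpos)
    (isBoundedUnder_of ⟨0, hf_nonneg⟩), eventually_gt_atTop 0] with x hx hx0
  rw [← ncard_inter_Icc_eq_card_filter]
  exact ((lt_div_iff₀ (by exact_mod_cast hx0)).1 hx).le

lemma HasPosLowerDensity.exists_mem_ne_zero {S : Set ℕ} (hS : HasPosLowerDensity S) :
    ∃ s ∈ S, s ≠ 0 := by
  obtain ⟨α, hα, hαS⟩ := hS
  obtain ⟨x, hx, hx1⟩ := (hαS.and (eventually_ge_atTop 1)).exists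
  have hpos : 0 < #{s ∈ Ioc 0 x | s ∈ S} := by
    have : (0 : ℝ) < x := by exact_mod_cast hx1
    exact_mod_cast (mul_pos hα this).trans_le hx
  obtain ⟨s, hs⟩ := card_pos.1 hpos
  simp only [mem_filter, mem_Ioc] at hs
  exact ⟨s, hs.2, hs.1.1.ne'⟩

lemma card_filter_Ioc_add_mul_le {S : Set ℕ} {a g : ℕ} (hg : 0 < g)
    (hdvd : ∀ c, a + c ∈ S → g ∣ c) (x : ℕ) :
    #{s ∈ Ioc 0 (a + g * x) | s ∈ S} ≤ a + #{y ∈ Ioc 0 x | a + g * y ∈ S} := by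
  calc #{s ∈ Ioc 0 (a + g * x) | s ∈ S}
      ≤ #(Ioc 0 a ∪ {y ∈ Ioc 0 x | a + g * y ∈ S}.image (a + g * ·)) := by
        refine card_le_card fun s hs => ?_
        simp only [mem_filter, mem_Ioc] at hs
        simp only [mem_union, mem_Ioc, mem_image, mem_filter]
        by_cases hsa : s ≤ a
        · exact .inl ⟨hs.1.1, hsa⟩
        have hs' : a + (s - a) ∈ S := by rw [Nat.add_sub_cancel' (by omega)]; exact hs.2
        obtain ⟨y, hy⟩ := hdvd (s - a) hs'
        have hy0 : 0 < y := Nat.pos_of_ne_zero (by rintro rfl; omega)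
        have hyx : y ≤ x := Nat.le_of_mul_le_mul_left (by omega) hg
        exact .inr ⟨y, ⟨⟨hy0, hyx⟩, hy ▸ hs'⟩, by omega⟩
    _ ≤ a + #{y ∈ Ioc 0 x | a + g * y ∈ S} := by
        grw [card_union_le, card_image_le, Nat.card_Ioc, Nat.sub_zero]

lemma HasPosLowerDensity.preimage_add_mul {S : Set ℕ} (hS : HasPosLowerDensity S) {a g : ℕ}
    (hg : 0 < g) (hdvd : ∀ c, a + c ∈ S → g ∣ c) :
    HasPosLowerDensity {y | a + g * y ∈ S} := by
  obtain ⟨α, hα, hαS⟩ := hS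
  have hlin : Tendsto (fun x : ℕ => a + g * x) atTop atTop :=
    tendsto_atTop_mono (fun x => (Nat.le_mul_of_pos_left x hg).trans (Nat.le_add_left _ a))
      tendsto_id
  refine ⟨α / 2, by positivity, ?_⟩
  filter_upwards [hlin.eventually hαS, eventually_ge_atTop ⌈2 * a / α⌉₊] with x hx hxa
  have hcount : (#{s ∈ Ioc 0 (a + g * x) | s ∈ S} : ℝ) ≤
      a + #{y ∈ Ioc 0 x | a + g * y ∈ S} := by
    exact_mod_cast card_filter_Ioc_add_mul_le hg hdvd x
  have hxa' : 2 * a ≤ x * α := (div_le_iff₀ hα).1 (Nat.ceil_le.1 hxa)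
  have hgx : (x : ℝ) ≤ g * x := le_mul_of_one_le_left (by positivity) (by exact_mod_cast hg)
  push_cast at hx
  nlinarith [mul_le_mul_of_nonneg_left hgx hα.le,
    mul_nonneg hα.le (Nat.cast_nonneg (α := ℝ) a)]

lemma HasPosLowerDensity.exists_schnirelmannDensity_union_Iic_pos {C : Set ℕ}
    (hC : HasPosLowerDensity C) : ∃ K : ℕ, 0 < schnirelmannDensity (C ∪ Set.Iic K) := by
  obtain ⟨α, hα, hαC⟩ := hC
  obtain ⟨K, hK⟩ := eventually_atTop.1 hαC
  refine ⟨K, (lt_min hα one_pos).trans_le (le_schnirelmannDensity_iff.2 fun n hn => ?_)⟩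
  rw [le_div_iff₀ (by positivity)]
  rcases le_total n K with hnK | hKn
  · have hfull : #{x ∈ Ioc 0 n | x ∈ C ∪ Set.Iic K} = n := by
      rw [filter_true_of_mem fun x hx => .inr ((mem_Ioc.1 hx).2.trans hnK), Nat.card_Ioc,
        Nat.sub_zero]
    rw [hfull]
    exact mul_le_of_le_one_left (Nat.cast_nonneg n) (min_le_right _ _)
  · calc min α 1 * n ≤ α * n := by gcongr; exact min_le_left _ _
      _ ≤ #{x ∈ Ioc 0 n | x ∈ C} := hK n hKn
      _ ≤ #{x ∈ Ioc 0 n | x ∈ C ∪ Set.Iic K} := by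
        exact_mod_cast card_le_card (monotone_filter_right _ fun x _ hx => Or.inl hx)

lemma AddSubmonoid.exists_add_mem_and_forall_dvd (U : AddSubmonoid ℕ) {u : ℕ} (hu : u ∈ U)
    (hu0 : u ≠ 0) : ∃ g > 0, ∃ p ∈ U, p + g ∈ U ∧ ∀ v ∈ U, g ∣ v := by
  have hex : ∃ g, 0 < g ∧ ∃ p ∈ U, p + g ∈ U :=
    ⟨u, Nat.pos_of_ne_zero hu0, 0, U.zero_mem, by simpa⟩
  set g := Nat.find hex
  obtain ⟨hg, p, hp, hpg⟩ : 0 < g ∧ ∃ p ∈ U, p + g ∈ U := Nat.find_spec hex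
  refine ⟨g, hg, p, hp, hpg, fun v hv => Nat.dvd_of_mod_eq_zero ?_⟩
  by_contra hr
  -- `(v / g) • (p + g)` and `(v / g) • p + v` lie in `U` and differ by `v % g < g`
  have hdiff : (v / g) • (p + g) + v % g = (v / g) • p + v := by
    simp only [smul_eq_mul]
    linarith [Nat.div_add_mod v g]
  exact Nat.find_min hex (Nat.mod_lt v hg) ⟨Nat.pos_of_ne_zero hr, _, U.nsmul_mem hpg _,
    hdiff ▸ U.add_mem (U.nsmul_mem hp _) hv⟩

lemma exists_mem_nsmul_of_mem_closure {C : Set ℕ} {x : ℕ} (hx : x ∈ AddSubmonoid.closure C) :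
    ∃ m : ℕ, x ∈ m • C := by
  induction hx using AddSubmonoid.closure_induction with
  | mem x hx => exact ⟨1, by simpa⟩
  | zero => exact ⟨0, by simp⟩
  | add x y _ _ hx hy =>
    obtain ⟨m, hm⟩ := hx
    obtain ⟨n, hn⟩ := hy
    exact ⟨m + n, by rw [add_nsmul]; exact Set.add_mem_add hm hn⟩

lemma nsmul_eq_image_mul_nsmul {C : Set ℕ} {g : ℕ} (hg : ∀ c ∈ C, g ∣ c) (m : ℕ) :
    m • C = (g * ·) '' (m • {x | g * x ∈ C}) := by
  have hC : (g * ·) '' {x | g * x ∈ C} = C := by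
    ext c
    refine ⟨?_, fun hc => ?_⟩
    · rintro ⟨x, hx, rfl⟩
      exact hx
    · obtain ⟨x, rfl⟩ := hg c hc
      exact ⟨x, hc, rfl⟩
  conv_lhs => rw [← hC]
  exact (Set.image_nsmul (AddMonoidHom.mulLeft g) _ m).symm

lemma exists_dvd_and_consecutive_mem_nsmul {C : Set ℕ} (h0 : 0 ∈ C) {c : ℕ} (hc : c ∈ C)
    (hc0 : c ≠ 0) : ∃ g > 0, (∀ c ∈ C, g ∣ c) ∧
      ∃ m q : ℕ, q ∈ m • {x | g * x ∈ C} ∧ q + 1 ∈ m • {x | g * x ∈ C} := by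
  obtain ⟨g, hg, p, hp, hpg, hdvd⟩ := (AddSubmonoid.closure C).exists_add_mem_and_forall_dvd
    (AddSubmonoid.subset_closure hc) hc0
  have hdvdC : ∀ c ∈ C, g ∣ c := fun c hc => hdvd c (AddSubmonoid.subset_closure hc)
  obtain ⟨m₁, hm₁⟩ := exists_mem_nsmul_of_mem_closure hp
  obtain ⟨m₂, hm₂⟩ := exists_mem_nsmul_of_mem_closure hpg
  have h0' : 0 ∈ {x | g * x ∈ C} := by simpa using h0
  have hdiv : ∀ {m x : ℕ}, m ≤ max m₁ m₂ → x ∈ m • C →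
      ∃ y ∈ max m₁ m₂ • {x | g * x ∈ C}, g * y = x := by
    intro m x hm hx
    rw [nsmul_eq_image_mul_nsmul hdvdC] at hx
    obtain ⟨y, hy, rfl⟩ := hx
    exact ⟨y, Set.nsmul_subset_nsmul_right h0' hm hy, rfl⟩
  obtain ⟨q, hq, rfl⟩ := hdiv (le_max_left _ _) hm₁
  obtain ⟨q', hq', hqq'⟩ := hdiv (le_max_right _ _) hm₂
  obtain rfl : q' = q + 1 := Nat.eq_of_mul_eq_mul_left hg (by rw [hqq']; ring)
  exact ⟨g, hg, hdvdC, _, q, hq, hq'⟩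

lemma nsmul_Iic_subset (h K : ℕ) : h • Set.Iic K ⊆ Set.Iic (h * K) := by
  induction h with
  | zero => simp
  | succ h ih =>
    rw [succ_nsmul, add_mul, one_mul]
    exact (Set.add_subset_add_right ih).trans (Set.Iic_add_Iic_subset _ _)

lemma add_mem_nsmul_of_consecutive {C : Set ℕ} {m q : ℕ} (hq : q ∈ m • C)
    (hq1 : q + 1 ∈ m • C) {K j : ℕ} (hj : j ≤ K) : K * q + j ∈ (K * m) • C := by
  obtain ⟨i, rfl⟩ := Nat.exists_eq_add_of_le hj
  have hsum : (j + i) * q + j = i • q + j • (q + 1) := by simp only [smul_eq_mul]; ring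
  rw [hsum, add_comm j i, add_mul, add_nsmul, mul_nsmul', mul_nsmul']
  exact Set.add_mem_add (Set.nsmul_mem_nsmul hq) (Set.nsmul_mem_nsmul hq1)

lemma HasPosLowerDensity.exists_forall_add_mem_nsmul {C : Set ℕ} (hC : HasPosLowerDensity C)
    (h0 : 0 ∈ C) {m q : ℕ} (hq : q ∈ m • C) (hq1 : q + 1 ∈ m • C) :
    ∃ M e : ℕ, ∀ y, e + y ∈ M • C := by
  obtain ⟨K, hK⟩ := hC.exists_schnirelmannDensity_union_Iic_pos
  obtain ⟨h, hh⟩ := exists_nsmul_eq_univ_of_schnirelmannDensity_pos (Set.mem_union_left _ h0) hK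
  refine ⟨h + h * K * m, h * K * q, fun y => ?_⟩
  have hsub : C ∪ Set.Iic K ⊆ C + Set.Iic K := Set.union_subset
    (Set.subset_add_left C (Set.mem_Iic.2 (Nat.zero_le K))) (Set.subset_add_right _ h0)
  have hy : y ∈ h • (C + Set.Iic K) := Set.nsmul_subset_nsmul_left hsub (by rw [hh]; trivial)
  rw [nsmul_add] at hy
  obtain ⟨c, hc, r, hr, rfl⟩ := hy
  have hr' := add_mem_nsmul_of_consecutive hq hq1 (nsmul_Iic_subset h K hr)
  rw [add_nsmul, add_left_comm]
  exact Set.add_mem_add hc hr'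

lemma add_mul_mem_nsmul_of_mem_nsmul_preimage {S : Set ℕ} {a g M x : ℕ}
    (hx : x ∈ M • {y | a + g * y ∈ S}) : M * a + g * x ∈ M • S := by
  have hsub : {a} + (g * ·) '' {y | a + g * y ∈ S} ⊆ S := by
    rintro _ ⟨_, rfl, _, ⟨y, hy, rfl⟩, rfl⟩
    exact hy
  refine Set.nsmul_subset_nsmul_left hsub ?_
  rw [nsmul_add, Set.nsmul_singleton, show (g * ·) = ⇑(AddMonoidHom.mulLeft g) from rfl,
    ← Set.image_nsmul]
  exact Set.add_mem_add rfl ⟨x, hx, rfl⟩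

lemma HasPosLowerDensity.exists_forall_add_mul_mem_nsmul {S : Set ℕ}
    (hS : HasPosLowerDensity S) : ∃ M e g : ℕ, 0 < g ∧ ∀ y, e + g * y ∈ M • S := by
  obtain ⟨s, hs, -⟩ := hS.exists_mem_ne_zero
  have hC : HasPosLowerDensity {c | s + c ∈ S} := by
    simpa using hS.preimage_add_mul one_pos fun _ _ => one_dvd _
  obtain ⟨c, hc, hc0⟩ := hC.exists_mem_ne_zero
  obtain ⟨g, hg, hdvd, m, q, hq, hq1⟩ :=
    exists_dvd_and_consecutive_mem_nsmul (C := {c | s + c ∈ S}) (by simpa using hs) hc hc0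
  obtain ⟨M, e, he⟩ := (hS.preimage_add_mul hg hdvd).exists_forall_add_mem_nsmul
    (by simpa using hs) hq hq1
  refine ⟨M, M * s + g * e, g, hg, fun y => ?_⟩
  simpa [mul_add, add_assoc] using add_mul_mem_nsmul_of_mem_nsmul_preimage (he y)

lemma strongAPIn_of_forall_add_mul_mem {T : Set ℕ} {e g : ℕ} (hg : 0 < g)
    (hT : ∀ y, e + g * y ∈ T) (N : ℕ) : StrongAPIn ((fun m : ℕ => (m : ℤ)) '' T) N := by
  -- with common difference `(e + 1) g > e`, all terms before `e` are negative
  refine ⟨e, (e + 1) * g, by nlinarith,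
    fun i _ => ⟨_, hT ((e + 1) * i), by push_cast; ring⟩, ?_⟩
  rintro i hi - ⟨w, -, hw⟩
  have hig : (1 : ℤ) ≤ i * g := by exact_mod_cast Nat.one_le_iff_ne_zero.2 (by positivity)
  nlinarith [(Int.natCast_nonneg w : (0 : ℤ) ≤ w)]

/-- If `A ⊆ ℕ` is `ap*`-sparse (no `Σ_n(A)` strongly contains arbitrarily long
arithmetic progressions), then `A` is `δ̲`-sparse: every `Σ_n(A)` has lower density `0`. -/
theorem lowerDensity_sparse_of_apstar_sparse (A : Set ℕ)
    (h : ∀ n : ℕ, 1 ≤ n →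
      ¬ ∀ N : ℕ, StrongAPIn ((fun m : ℕ => (m : ℤ)) '' sigmaSumN n A) N) :
    ∀ n : ℕ, 1 ≤ n → lowerDensity (sigmaSumN n A) = 0 := by
  intro n hn
  by_contra hne
  obtain ⟨M, e, g, hg, hAP⟩ :=
    (hasPosLowerDensity_of_lowerDensity_ne_zero hne).exists_forall_add_mul_mem_nsmul
  have hM : M ≠ 0 := by
    rintro rfl
    simpa [hg.ne'] using hAP 1
  exact h (M * n) (Nat.one_le_iff_ne_zero.2 (mul_ne_zero hM (by omega)))
    (strongAPIn_of_forall_add_mul_mem hg fun y => nsmul_sigmaSumN_subset hM n A (hAP y))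
end

section
/- For A ⊆ ℕ, the following are equivalent: (i) A is δ̲-sparse, i.e. δ̲(Σ_n(A)) = 0 for every n ≥ 1; (ii) for every n ≥ 1, Σ_n(A) does not contain an infinite arithmetic progression {a + id : i ∈ ℕ} with common difference d ≥ 1. -/
open Filter

open Classical in
noncomputable def cnt (S : Set ℕ) (m : ℕ) : ℕ :=
  ((Finset.Icc 1 m).filter (· ∈ S)).card

open Classical in
lemma cnt_le (S : Set ℕ) (m : ℕ) : cnt S m ≤ m := by
  calc cnt S m ≤ (Finset.Icc 1 m).card := Finset.card_filter_le _ _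
  _ = m := by rw [Nat.card_Icc]; omega

open Classical in
lemma cnt_mono {S T : Set ℕ} (h : S ⊆ T) (m : ℕ) : cnt S m ≤ cnt T m := by
  apply Finset.card_le_card
  intro x hx
  simp only [Finset.mem_filter] at hx ⊢
  exact ⟨hx.1, h hx.2⟩

open Classical in
lemma ncard_eq_cnt (S : Set ℕ) (m : ℕ) :
    (S ∩ Set.Icc 1 m).ncard = cnt S m := by
  rw [cnt, ← Set.ncard_coe_finset]
  congr 1
  ext x
  simp only [Set.mem_inter_iff, Set.mem_Icc, Finset.coe_filter, Finset.mem_Icc,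
    Set.mem_setOf_eq]
  tauto

lemma lowerDensity_eq (S : Set ℕ) :
    lowerDensity S = Filter.liminf (fun n : ℕ => (cnt S n : ℝ) / n) Filter.atTop := by
  unfold lowerDensity
  congr 1
  ext n
  rw [ncard_eq_cnt]

/-- membership lemmas for kFoldN -/
lemma kFoldN_zero (X : Set ℕ) : kFoldN X 0 = {0} := by
  ext z
  constructor
  · rintro ⟨f, -, rfl⟩; simp
  · rintro rfl; exact ⟨fun i => i.elim0, fun i => i.elim0, by simp⟩

lemma mem_kFoldN_one {X : Set ℕ} {x : ℕ} : x ∈ kFoldN X 1 ↔ x ∈ X := by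
  constructor
  · rintro ⟨f, hf, rfl⟩
    simpa using hf 0
  · intro hx
    exact ⟨fun _ => x, fun _ => hx, by simp⟩

lemma add_mem_kFoldN {X : Set ℕ} {x y k₁ k₂ : ℕ}
    (hx : x ∈ kFoldN X k₁) (hy : y ∈ kFoldN X k₂) : x + y ∈ kFoldN X (k₁ + k₂) := by
  obtain ⟨f, hf, rfl⟩ := hx
  obtain ⟨g, hg, rfl⟩ := hy
  refine ⟨Fin.addCases f g, ?_, ?_⟩
  · intro i
    refine Fin.addCases (fun j => ?_) (fun j => ?_) i
    · simpa using hf j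
    · simpa using hg j
  · rw [Fin.sum_univ_add]
    congr 1
    · exact Finset.sum_congr rfl fun j _ => by simp
    · exact Finset.sum_congr rfl fun j _ => by simp

lemma const_mem_kFoldN {X : Set ℕ} {b : ℕ} (hb : b ∈ X) (k : ℕ) : k * b ∈ kFoldN X k :=
  ⟨fun _ => b, fun _ => hb, by simp [Finset.sum_const, mul_comm]⟩

lemma mem_kFoldN_succ {X : Set ℕ} {z : ℕ} {k : ℕ} :
    z ∈ kFoldN X (k + 1) ↔ ∃ x ∈ X, ∃ y ∈ kFoldN X k, z = x + y := by
  constructor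
  · rintro ⟨f, hf, rfl⟩
    exact ⟨f 0, hf 0, ∑ i : Fin k, f i.succ, ⟨fun i : Fin k => f i.succ, fun i => hf _, rfl⟩,
      by rw [Fin.sum_univ_succ]⟩
  · rintro ⟨x, hx, y, hy, rfl⟩
    have := add_mem_kFoldN (mem_kFoldN_one.2 hx) hy
    rwa [add_comm 1 k] at this

lemma mem_sigmaSumN {X : Set ℕ} {n x : ℕ} :
    x ∈ sigmaSumN n X ↔ ∃ k, 1 ≤ k ∧ k ≤ n ∧ x ∈ kFoldN X k := by
  simp [sigmaSumN, Finset.mem_Icc, and_assoc]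

/-! liminf infrastructure -/

lemma cnt_div_nonneg (S : Set ℕ) (n : ℕ) : (0:ℝ) ≤ (cnt S n : ℝ) / n := by positivity

lemma cnt_div_le_one (S : Set ℕ) (n : ℕ) : (cnt S n : ℝ) / n ≤ 1 := by
  rcases Nat.eq_zero_or_pos n with rfl | hn
  · simp
  · rw [div_le_one (by positivity)]
    exact_mod_cast cnt_le S n

lemma liminf_ge_of_eventually {S : Set ℕ} {c : ℝ}
    (h : ∀ᶠ n in atTop, c ≤ (cnt S n : ℝ) / n) :
    c ≤ Filter.liminf (fun n : ℕ => (cnt S n : ℝ) / n) Filter.atTop := by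
  have hb : Filter.IsBoundedUnder (· ≤ ·) Filter.atTop (fun n : ℕ => (cnt S n : ℝ) / n) :=
    Filter.isBoundedUnder_of ⟨1, fun n : ℕ => cnt_div_le_one S n⟩
  exact Filter.le_liminf_of_le hb.isCoboundedUnder_ge h

lemma lowerDensity_nonneg (S : Set ℕ) : 0 ≤ lowerDensity S := by
  rw [lowerDensity_eq]
  exact liminf_ge_of_eventually (Filter.Eventually.of_forall (fun n => cnt_div_nonneg S n))

lemma exists_density_of_ne_zero {S : Set ℕ} (h : lowerDensity S ≠ 0) :
    ∃ β : ℝ, 0 < β ∧ ∃ N₀ : ℕ, ∀ m : ℕ, N₀ ≤ m → β * m ≤ (cnt S m : ℝ) := by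
  have hpos : 0 < lowerDensity S := lt_of_le_of_ne (lowerDensity_nonneg S) (Ne.symm h)
  refine ⟨lowerDensity S / 2, by positivity, ?_⟩
  have hb : Filter.IsBoundedUnder (· ≥ ·) Filter.atTop (fun n : ℕ => (cnt S n : ℝ) / n) :=
    Filter.isBoundedUnder_of ⟨0, fun n : ℕ => cnt_div_nonneg S n⟩
  have hev : ∀ᶠ n in atTop, lowerDensity S / 2 < (cnt S n : ℝ) / n := by
    apply Filter.eventually_lt_of_lt_liminf _ hb
    rw [← lowerDensity_eq]
    exact half_lt_self hpos
  rw [Filter.eventually_atTop] at hev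
  obtain ⟨N₀, hN₀⟩ := hev
  refine ⟨max N₀ 1, fun m hm => ?_⟩
  have h1 : (1:ℕ) ≤ m := le_trans (le_max_right _ _) hm
  have := hN₀ m (le_trans (le_max_left _ _) hm)
  have hm0 : (0:ℝ) < m := by exact_mod_cast h1
  calc lowerDensity S / 2 * m ≤ ((cnt S m : ℝ)/m) * m := by
        apply mul_le_mul_of_nonneg_right (le_of_lt this) (le_of_lt hm0)
  _ = cnt S m := by field_simp

lemma lowerDensity_ne_zero_of_cnt_ge {S : Set ℕ} {β : ℝ} (hβ : 0 < β) {N₀ : ℕ}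
    (h : ∀ m : ℕ, N₀ ≤ m → β * m ≤ (cnt S m : ℝ)) : lowerDensity S ≠ 0 := by
  have : β ≤ lowerDensity S := by
    rw [lowerDensity_eq]
    apply liminf_ge_of_eventually
    rw [Filter.eventually_atTop]
    refine ⟨max N₀ 1, fun m hm => ?_⟩
    have h1 : (1:ℕ) ≤ m := le_trans (le_max_right _ _) hm
    have hm0 : (0:ℝ) < m := by exact_mod_cast h1
    rw [le_div_iff₀ hm0]
    exact h m (le_trans (le_max_left _ _) hm)
  intro h0
  rw [h0] at this
  exact absurd this (not_le.2 hβ)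

open Classical in
lemma lowerDensity_ne_zero_of_ap {S : Set ℕ} {a d : ℕ} (hd : 1 ≤ d)
    (h : ∀ i : ℕ, a + i * d ∈ S) : lowerDensity S ≠ 0 := by
  have hdR : (0:ℝ) < d := by exact_mod_cast hd
  apply lowerDensity_ne_zero_of_cnt_ge (β := 1/(2*d)) (by positivity) (N₀ := 2*(a+d))
  intro m hm
  have ham : a ≤ m := by omega
  set K := (m - a)/d with hK
  have hcnt : K ≤ cnt S m := by
    have hinj : ((Finset.range K).image (fun i => a + (i+1)*d)).card = K := by
      rw [Finset.card_image_of_injective _ (fun i j hij => by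
        have h2 : (i+1)*d = (j+1)*d := by omega
        have := Nat.eq_of_mul_eq_mul_right (show 0 < d by omega) h2
        omega)]
      exact Finset.card_range K
    rw [← hinj]
    apply Finset.card_le_card
    intro x hx
    simp only [Finset.mem_image, Finset.mem_range] at hx
    obtain ⟨i, hi, rfl⟩ := hx
    have h1 : (i+1)*d ≤ K*d := Nat.mul_le_mul_right d (by omega)
    have h2 : K*d ≤ m - a := Nat.div_mul_le_self _ _
    have h3 : 1 ≤ (i+1)*d := Nat.mul_pos (by omega) (by omega)
    simp only [Finset.mem_filter, Finset.mem_Icc]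
    exact ⟨⟨by omega, by omega⟩, h (i+1)⟩
  have h5 : m - a < d * K + d := by
    have h6 := Nat.div_add_mod (m-a) d
    rw [← hK] at h6
    have h7 := Nat.mod_lt (m-a) (show 0 < d by omega)
    omega
  have hKreal : ((m:ℝ) - a - d)/d ≤ (K:ℝ) := by
    rw [div_le_iff₀ hdR]
    have h5R : (m:ℝ) - a < d * K + d := by
      have := (by exact_mod_cast h5 : ((m-a:ℕ):ℝ) < (d:ℝ) * K + d)
      rwa [Nat.cast_sub ham] at this
    nlinarith
  have hhalf : (m:ℝ)/2 ≤ (m:ℝ) - a - d := by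
    have hmR : 2*((a:ℝ)+(d:ℝ)) ≤ (m:ℝ) := by exact_mod_cast hm
    linarith
  calc (1/(2*(d:ℝ))) * m = ((m:ℝ)/2)/d := by field_simp
  _ ≤ ((m:ℝ)-a-d)/d := by gcongr
  _ ≤ K := hKreal
  _ ≤ cnt S m := by exact_mod_cast hcnt

/-! Schnirelmann inequality -/

def sumSet (X Y : Set ℕ) : Set ℕ := {z : ℕ | ∃ x ∈ X, ∃ y ∈ Y, z = x + y}

section Schn

attribute [local instance] Classical.propDecidable

lemma cnt_add_not (Y : Set ℕ) (L : ℕ) :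
    cnt Y L + ((Finset.Icc 1 L).filter (· ∉ Y)).card = L := by
  rw [cnt, Finset.card_filter_add_card_filter_not]
  · rw [Nat.card_Icc]; omega

lemma schnirelmann_ineq {X Y : Set ℕ} {σ₁ σ₂ : ℝ} (h0X : 0 ∈ X) (h0Y : 0 ∈ Y)
    (hσ₁0 : 0 ≤ σ₁) (hσ₂1 : σ₂ ≤ 1)
    (hX : ∀ m : ℕ, 1 ≤ m → σ₁ * m ≤ (cnt X m : ℝ))
    (hY : ∀ m : ℕ, 1 ≤ m → σ₂ * m ≤ (cnt Y m : ℝ)) :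
    ∀ m : ℕ, 1 ≤ m → (σ₁ + σ₂ - σ₁*σ₂) * m ≤ (cnt (sumSet X Y) m : ℝ) := by
  intro m hm
  have hY' : ∀ L : ℕ, σ₂ * L ≤ (cnt Y L : ℝ) := by
    intro L
    rcases Nat.eq_zero_or_pos L with rfl | hL
    · simp
    · exact hY L hL
  set a : ℕ → ℕ := fun t => Nat.findGreatest (· ∈ X) t with ha
  have haX : ∀ t, a t ∈ X := fun t => Nat.findGreatest_spec (Nat.zero_le t) h0X
  have hale : ∀ t, a t ≤ t := fun t => Nat.findGreatest_le t
  set bad := (Finset.Icc 1 m).filter (fun t => t ∉ sumSet X Y) with hbad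
  have hsplit : cnt (sumSet X Y) m + bad.card = m := by
    rw [cnt, hbad, Finset.card_filter_add_card_filter_not, Nat.card_Icc]
    omega
  -- properties of bad elements
  have hbadnX : ∀ t ∈ bad, t ∉ X := by
    intro t ht htX
    have : t ∈ sumSet X Y := ⟨t, htX, 0, h0Y, by omega⟩
    simp [hbad, Finset.mem_filter] at ht
    exact ht.2 this
  have hbadlt : ∀ t ∈ bad, a t < t := by
    intro t ht
    rcases lt_or_eq_of_le (hale t) with h | h
    · exact h
    · exact absurd (h ▸ haX t) (hbadnX t ht)
  have hbadY : ∀ t ∈ bad, (t - a t) ∉ Y := by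
    intro t ht hY2
    have : t ∈ sumSet X Y := ⟨a t, haX t, t - a t, hY2, by have := hale t; omega⟩
    simp [hbad, Finset.mem_filter] at ht
    exact ht.2 this
  -- fibers
  set I := bad.image a with hI
  have hfib : bad.card = ∑ x ∈ I, (bad.filter (fun t => a t = x)).card :=
    Finset.card_eq_sum_card_fiberwise (fun t ht => Finset.mem_image_of_mem a ht)
  -- for each x ∈ I, the fiber is nonempty
  have hfibne : ∀ x ∈ I, (bad.filter (fun t => a t = x)).Nonempty := by
    intro x hx
    obtain ⟨t, ht, hta⟩ := Finset.mem_image.1 hx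
    exact ⟨t, Finset.mem_filter.2 ⟨ht, hta⟩⟩
  set u : ℕ → ℕ := fun x => if h : (bad.filter (fun t => a t = x)).Nonempty
    then (bad.filter (fun t => a t = x)).max' h else 0 with hu
  -- fiber card bound
  have hfibcard : ∀ x ∈ I, (bad.filter (fun t => a t = x)).card + cnt Y ((u x - x)) ≤ (u x - x) := by
    intro x hx
    have hne := hfibne x hx
    have humax : ∀ t ∈ bad.filter (fun t => a t = x), t ≤ u x := by
      intro t ht
      rw [hu]
      simp only [dif_pos hne]
      exact Finset.le_max' _ t ht
    have hcard : (bad.filter (fun t => a t = x)).card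
        ≤ ((Finset.Icc 1 ((u x - x))).filter (· ∉ Y)).card := by
      apply Finset.card_le_card_of_injOn (fun t => t - x)
      · intro t ht
        have ht' := Finset.mem_filter.1 ht
        have hax : a t = x := ht'.2
        have h1 : x < t := hax ▸ hbadlt t ht'.1
        have h2 : t ≤ u x := humax t ht
        have h3 : t - a t ∉ Y := hbadY t ht'.1
        rw [hax] at h3
        simp only [Finset.mem_coe, Finset.mem_filter, Finset.mem_Icc]
        exact ⟨⟨by omega, by omega⟩, h3⟩
      · intro t₁ h₁ t₂ h₂ he
        have he' : t₁ - x = t₂ - x := he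
        have g₁ := (Finset.mem_filter.1 h₁).2
        have g₂ := (Finset.mem_filter.1 h₂).2
        have l₁ := hbadlt t₁ (Finset.mem_filter.1 h₁).1
        have l₂ := hbadlt t₂ (Finset.mem_filter.1 h₂).1
        rw [g₁] at l₁; rw [g₂] at l₂
        omega
    have := cnt_add_not Y ((u x - x))
    omega
  -- interval sum bound
  have hIsum : (∑ x ∈ I, (u x - x)) + cnt X m ≤ m := by
    have hdisj : (I : Set ℕ).PairwiseDisjoint (fun x => Finset.Icc (x+1) (u x)) := by
      intro x hx x' hx' hne
      simp only [Function.onFun, Finset.disjoint_left]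
      intro j hj hj'
      simp only [Finset.mem_Icc] at hj hj'
      -- wlog x < x'
      rcases lt_or_gt_of_ne hne with hlt | hlt
      · -- x < x' < j ≤ u x, and x' ∈ X : contradiction with findGreatest at u x
        have hx'X : x' ∈ X := by
          obtain ⟨t, ht, hta⟩ := Finset.mem_image.1 hx'
          exact hta ▸ haX t
        have huxfib := hfibne x hx
        have haux : a (u x) = x := by
          have : u x ∈ bad.filter (fun t => a t = x) := by
            rw [hu]
            simp only [dif_pos huxfib]
            exact (bad.filter (fun t => a t = x)).max'_mem huxfib
          exact (Finset.mem_filter.1 this).2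
        have haux' : Nat.findGreatest (fun z => z ∈ X) (u x) = x := haux
        have : ¬ (x' ∈ X) := by
          apply Nat.findGreatest_is_greatest (show Nat.findGreatest (fun z => z ∈ X) (u x) < x' by omega)
          omega
        exact this hx'X
      · have hxX : x ∈ X := by
          obtain ⟨t, ht, hta⟩ := Finset.mem_image.1 hx
          exact hta ▸ haX t
        have huxfib := hfibne x' hx'
        have haux : a (u x') = x' := by
          have : u x' ∈ bad.filter (fun t => a t = x') := by
            rw [hu]
            simp only [dif_pos huxfib]
            exact (bad.filter (fun t => a t = x')).max'_mem huxfib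
          exact (Finset.mem_filter.1 this).2
        have haux' : Nat.findGreatest (fun z => z ∈ X) (u x') = x' := haux
        have : ¬ (x ∈ X) := by
          apply Nat.findGreatest_is_greatest (show Nat.findGreatest (fun z => z ∈ X) (u x') < x by omega)
          omega
        exact this hxX
    have hcardIcc : ∀ x ∈ I, (Finset.Icc (x+1) (u x)).card = (u x - x) := by
      intro x hx
      rw [Nat.card_Icc]
      omega
    have hsub : I.biUnion (fun x => Finset.Icc (x+1) (u x)) ⊆ (Finset.Icc 1 m).filter (· ∉ X) := by
      intro j hj
      obtain ⟨x, hx, hjx⟩ := Finset.mem_biUnion.1 hj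
      simp only [Finset.mem_Icc] at hjx
      have hne := hfibne x hx
      have humem : u x ∈ bad := by
        have : u x ∈ bad.filter (fun t => a t = x) := by
          rw [hu]; simp only [dif_pos hne]
          exact (bad.filter (fun t => a t = x)).max'_mem hne
        exact (Finset.mem_filter.1 this).1
      have hum : u x ≤ m := by
        have := (Finset.mem_filter.1 humem).1
        simp only [Finset.mem_Icc] at this
        exact this.2
      have haux : a (u x) = x := by
        have : u x ∈ bad.filter (fun t => a t = x) := by
          rw [hu]; simp only [dif_pos hne]
          exact (bad.filter (fun t => a t = x)).max'_mem hne
        exact (Finset.mem_filter.1 this).2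
      have haux' : Nat.findGreatest (fun z => z ∈ X) (u x) = x := haux
      have hjX : j ∉ X := by
        apply Nat.findGreatest_is_greatest (show Nat.findGreatest (fun z => z ∈ X) (u x) < j by omega)
        omega
      simp only [Finset.mem_filter, Finset.mem_Icc]
      exact ⟨⟨by omega, by omega⟩, hjX⟩
    have hbiu : (I.biUnion (fun x => Finset.Icc (x+1) (u x))).card = ∑ x ∈ I, (u x - x) := by
      rw [Finset.card_biUnion hdisj]
      exact Finset.sum_congr rfl hcardIcc
    have hle := Finset.card_le_card hsub
    rw [hbiu] at hle
    have := cnt_add_not X m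
    -- ((Icc 1 m).filter (·∉X)).card = m - cnt X m
    omega
  -- real arithmetic assembly
  have hbadbound : (bad.card : ℝ) ≤ (1 - σ₂) * ((m:ℝ) - cnt X m) := by
    have h1 : (bad.card : ℝ) ≤ ∑ x ∈ I, (((u x - x : ℕ) : ℝ) - (cnt Y (u x - x) : ℝ)) := by
      rw [hfib, Nat.cast_sum]
      apply Finset.sum_le_sum
      intro x hx
      have h := hfibcard x hx
      have h' : ((Finset.filter (fun t => a t = x) bad).card : ℝ) + cnt Y (u x - x)
          ≤ ((u x - x : ℕ):ℝ) := by exact_mod_cast h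
      linarith
    have h2 : ∀ x ∈ I, (((u x - x : ℕ):ℝ) - cnt Y (u x - x))
        ≤ (1-σ₂) * ((u x - x : ℕ):ℝ) := by
      intro x hx
      have := hY' (u x - x)
      nlinarith [this]
    have h3 : (bad.card : ℝ) ≤ ∑ x ∈ I, (1 - σ₂) * ((u x - x : ℕ) : ℝ) :=
      le_trans h1 (Finset.sum_le_sum h2)
    rw [← Finset.mul_sum] at h3
    have h4 : (∑ x ∈ I, ((u x - x : ℕ):ℝ)) ≤ (m : ℝ) - cnt X m := by
      have hc : ((∑ x ∈ I, (u x - x) : ℕ) : ℝ) + (cnt X m : ℝ) ≤ (m:ℝ) := by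
        exact_mod_cast hIsum
      rw [Nat.cast_sum] at hc
      linarith
    have hσ₂ : (0:ℝ) ≤ 1 - σ₂ := by linarith
    calc (bad.card : ℝ) ≤ (1-σ₂) * ∑ x ∈ I, ((u x - x : ℕ) : ℝ) := h3
    _ ≤ (1-σ₂) * ((m:ℝ) - cnt X m) := by
        apply mul_le_mul_of_nonneg_left h4 hσ₂
  have hXm := hX m hm
  have hfinal : (1 - σ₂) * ((m:ℝ) - cnt X m) ≤ (1-σ₂)*(1-σ₁)*m := by
    have hσ₂ : (0:ℝ) ≤ 1 - σ₂ := by linarith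
    have : (m:ℝ) - cnt X m ≤ (1-σ₁)*m := by nlinarith
    nlinarith
  have hcel : (cnt (sumSet X Y) m : ℝ) = (m:ℝ) - bad.card := by
    have : (cnt (sumSet X Y) m : ℝ) + bad.card = m := by exact_mod_cast hsplit
    linarith
  rw [hcel]
  nlinarith [hbadbound, hfinal]

end Schn

/-! Schnirelmann basis theorem -/

lemma zero_mem_kFoldN {X : Set ℕ} (h0 : 0 ∈ X) (k : ℕ) : 0 ∈ kFoldN X k := by
  simpa using const_mem_kFoldN h0 k

lemma kFoldN_one (X : Set ℕ) : kFoldN X 1 = X := by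
  ext x; exact mem_kFoldN_one

section Basis

attribute [local instance] Classical.propDecidable

lemma cnt_kFoldN_ge {X : Set ℕ} {σ₀ : ℝ} (h0 : 0 ∈ X) (hσ0 : 0 < σ₀) (hσ1 : σ₀ ≤ 1)
    (hX : ∀ m : ℕ, 1 ≤ m → σ₀ * m ≤ (cnt X m : ℝ)) :
    ∀ j : ℕ, ∀ m : ℕ, 1 ≤ m → (1 - (1-σ₀)^(j+1)) * m ≤ (cnt (kFoldN X (j+1)) m : ℝ) := by
  intro j
  induction j with
  | zero =>
    intro m hm
    rw [kFoldN_one]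
    simpa using hX m hm
  | succ j ih =>
    intro m hm
    have h0' : 0 ∈ kFoldN X (j+1) := zero_mem_kFoldN h0 (j+1)
    have hpow0 : (0:ℝ) ≤ (1-σ₀)^(j+1) := pow_nonneg (by linarith) _
    have hpow1 : (1-σ₀)^(j+1) ≤ 1 := pow_le_one₀ (by linarith) (by linarith)
    have key := schnirelmann_ineq (σ₁ := 1 - (1-σ₀)^(j+1)) (σ₂ := σ₀) h0' h0
      (by linarith) hσ1 ih hX m hm
    have hsub : sumSet (kFoldN X (j+1)) X ⊆ kFoldN X (j+1+1) := by
      rintro z ⟨x, hx, y, hy, rfl⟩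
      exact add_mem_kFoldN hx (mem_kFoldN_one.2 hy)
    have hmono := cnt_mono hsub m
    have hmonoR : (cnt (sumSet (kFoldN X (j+1)) X) m : ℝ) ≤ cnt (kFoldN X (j+1+1)) m := by
      exact_mod_cast hmono
    have heq : (1 - (1-σ₀)^(j+1)) + σ₀ - (1 - (1-σ₀)^(j+1))*σ₀ = 1 - (1-σ₀)^(j+1+1) := by
      ring
    have hstep : (1 - (1-σ₀)^(j+1+1)) * m = ((1 - (1-σ₀)^(j+1)) + σ₀ - (1 - (1-σ₀)^(j+1))*σ₀) * m := by ring
    rw [hstep]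
    exact le_trans key hmonoR

lemma schnirelmann_basis {X : Set ℕ} {σ₀ : ℝ} (h0 : 0 ∈ X) (h1 : 1 ∈ X)
    (hσ0 : 0 < σ₀) (hσ1 : σ₀ ≤ 1)
    (hX : ∀ m : ℕ, 1 ≤ m → σ₀ * m ≤ (cnt X m : ℝ)) :
    ∃ h : ℕ, 1 ≤ h ∧ ∀ z : ℕ, 1 ≤ z → z ∈ kFoldN X h := by
  obtain ⟨J, hJ⟩ := exists_pow_lt_of_lt_one (show (0:ℝ) < 1/2 by norm_num)
    (show 1 - σ₀ < 1 by linarith)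
  have hpow : (1-σ₀)^(J+1) < 1/2 := by
    calc (1-σ₀)^(J+1) ≤ (1-σ₀)^J :=
      pow_le_pow_of_le_one (by linarith) (by linarith) (Nat.le_succ J)
    _ < 1/2 := hJ
  set σ : ℝ := 1 - (1-σ₀)^(J+1) with hσ
  have hσhalf : 1/2 < σ := by rw [hσ]; linarith
  set W := kFoldN X (J+1) with hW
  have hWcnt := cnt_kFoldN_ge h0 hσ0 hσ1 hX J
  refine ⟨2*(J+1), by omega, ?_⟩
  intro z hz
  rcases Nat.lt_or_ge z 2 with hz2 | hz2
  · -- z = 1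
    have hz1 : z = 1 := by omega
    subst hz1
    have := add_mem_kFoldN (mem_kFoldN_one.2 h1) (zero_mem_kFoldN h0 (2*(J+1) - 1))
    have h2 : 1 + (2*(J+1) - 1) = 2*(J+1) := by omega
    rw [h2] at this
    first
    | exact this
    | simpa using this
  · -- pigeonhole
    have hWz : ∀ t : ℕ, (t ∈ W) = (t ∈ kFoldN X (J+1)) := fun t => rfl
    have hT₁card : σ * ((z:ℝ) - 1) ≤ ((Finset.Icc 1 (z-1)).filter (· ∈ W)).card := by
      have := hWcnt (z-1) (by omega)
      have hc : ((z - 1 : ℕ):ℝ) = (z:ℝ) - 1 := by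
        rw [Nat.cast_sub (by omega)]; norm_num
      rw [hc] at this
      exact this
    have hT₂card : ((Finset.Icc 1 (z-1)).filter (· ∈ W)).card ≤ ((Finset.Icc 1 (z-1)).filter (fun t => z - t ∈ W)).card := by
      apply Finset.card_le_card_of_injOn (fun t => z - t)
      · intro t ht
        have ht' := Finset.mem_filter.1 ht
        have htI := Finset.mem_Icc.1 ht'.1
        have : z - (z - t) = t := by omega
        simp only [Finset.mem_coe, Finset.mem_filter, Finset.mem_Icc]
        exact ⟨⟨by omega, by omega⟩, by rw [this]; exact ht'.2⟩
      · intro t₁ h₁ t₂ h₂ he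
        have i₁ := Finset.mem_Icc.1 (Finset.mem_filter.1 h₁).1
        have i₂ := Finset.mem_Icc.1 (Finset.mem_filter.1 h₂).1
        have he' : z - t₁ = z - t₂ := he
        omega
    have hinter : (((Finset.Icc 1 (z-1)).filter (· ∈ W)) ∩ ((Finset.Icc 1 (z-1)).filter (fun t => z - t ∈ W))).Nonempty := by
      by_contra hcon
      rw [Finset.not_nonempty_iff_eq_empty] at hcon
      have hdisj : Disjoint ((Finset.Icc 1 (z-1)).filter (· ∈ W)) ((Finset.Icc 1 (z-1)).filter (fun t => z - t ∈ W)) := Finset.disjoint_iff_inter_eq_empty.2 hcon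
      have hunion : (((Finset.Icc 1 (z-1)).filter (· ∈ W)) ∪ ((Finset.Icc 1 (z-1)).filter (fun t => z - t ∈ W))).card = ((Finset.Icc 1 (z-1)).filter (· ∈ W)).card + ((Finset.Icc 1 (z-1)).filter (fun t => z - t ∈ W)).card := Finset.card_union_of_disjoint hdisj
      have hsub : ((Finset.Icc 1 (z-1)).filter (· ∈ W)) ∪ ((Finset.Icc 1 (z-1)).filter (fun t => z - t ∈ W)) ⊆ Finset.Icc 1 (z-1) := by
        apply Finset.union_subset <;> exact Finset.filter_subset _ _
      have hle : ((Finset.Icc 1 (z-1)).filter (· ∈ W)).card + ((Finset.Icc 1 (z-1)).filter (fun t => z - t ∈ W)).card ≤ z - 1 := by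
        rw [← hunion]
        calc (((Finset.Icc 1 (z-1)).filter (· ∈ W)) ∪ ((Finset.Icc 1 (z-1)).filter (fun t => z - t ∈ W))).card ≤ (Finset.Icc 1 (z-1)).card := Finset.card_le_card hsub
        _ = z - 1 := by rw [Nat.card_Icc]; omega
      have hleR : (((Finset.Icc 1 (z-1)).filter (· ∈ W)).card : ℝ) + ((Finset.Icc 1 (z-1)).filter (fun t => z - t ∈ W)).card ≤ (z:ℝ) - 1 := by
        have : ((((Finset.Icc 1 (z-1)).filter (· ∈ W)).card + ((Finset.Icc 1 (z-1)).filter (fun t => z - t ∈ W)).card : ℕ):ℝ) ≤ ((z-1:ℕ):ℝ) := by exact_mod_cast hle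
        rw [Nat.cast_sub (by omega)] at this
        push_cast at this
        linarith
      have hzR : (0:ℝ) < (z:ℝ) - 1 := by
        have : (2:ℝ) ≤ z := by exact_mod_cast hz2
        linarith
      have hT₂R : σ * ((z:ℝ)-1) ≤ ((Finset.Icc 1 (z-1)).filter (fun t => z - t ∈ W)).card := le_trans hT₁card (by exact_mod_cast hT₂card)
      nlinarith
    obtain ⟨t, ht⟩ := hinter
    have ht₁ := Finset.mem_filter.1 (Finset.mem_inter.1 ht).1
    have ht₂ := Finset.mem_filter.1 (Finset.mem_inter.1 ht).2
    have htI := Finset.mem_Icc.1 ht₁.1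
    have := add_mem_kFoldN ht₁.2 ht₂.2
    have hzz : t + (z - t) = z := by omega
    have h2 : J + 1 + (J + 1) = 2*(J+1) := by omega
    rw [hzz, h2] at this
    exact this

end Basis

/-! composition lemmas -/

lemma kFoldN_scaled_comp {B : Set ℕ} {D : ℕ} :
    ∀ q x, x ∈ kFoldN {t : ℕ | ∃ k, 1 ≤ k ∧ k ≤ D ∧ D*t ∈ kFoldN B k} q →
      ∃ k, q ≤ k ∧ k ≤ q*D ∧ D*x ∈ kFoldN B k := by
  intro q
  induction q with
  | zero =>
    intro x hx
    rw [kFoldN_zero] at hx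
    rw [Set.mem_singleton_iff] at hx
    subst hx
    exact ⟨0, le_refl 0, by omega, by rw [kFoldN_zero]; simp⟩
  | succ q ih =>
    intro x hx
    obtain ⟨c, hc, y, hy, rfl⟩ := mem_kFoldN_succ.1 hx
    obtain ⟨k₁, hk₁1, hk₁D, hck⟩ := hc
    obtain ⟨k₂, hk₂q, hk₂D, hyk⟩ := ih y hy
    refine ⟨k₁ + k₂, by omega, by nlinarith, ?_⟩
    have : D*c + D*y ∈ kFoldN B (k₁ + k₂) := add_mem_kFoldN hck hyk
    have heq : D*(c+y) = D*c + D*y := by ring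
    rw [heq]
    exact this

lemma kFoldN_sigma_comp {A : Set ℕ} {n : ℕ} :
    ∀ k x, x ∈ kFoldN (sigmaSumN n A) k → ∃ j, k ≤ j ∧ j ≤ k*n ∧ x ∈ kFoldN A j := by
  intro k
  induction k with
  | zero =>
    intro x hx
    rw [kFoldN_zero] at hx
    rw [Set.mem_singleton_iff] at hx
    subst hx
    exact ⟨0, le_refl 0, by omega, by rw [kFoldN_zero]; simp⟩
  | succ k ih =>
    intro x hx
    obtain ⟨b, hb, y, hy, rfl⟩ := mem_kFoldN_succ.1 hx
    obtain ⟨j₁, hj₁1, hj₁n, hbj⟩ := mem_sigmaSumN.1 hb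
    obtain ⟨j₂, hj₂k, hj₂n, hyj⟩ := ih y hy
    exact ⟨j₁ + j₂, by omega, by nlinarith, add_mem_kFoldN hbj hyj⟩

lemma kFoldN_X_comp {C : Set ℕ} {p b₀ : ℕ} :
    ∀ j x, x ∈ kFoldN {y : ℕ | y + p*b₀ ∈ kFoldN C p} j →
      x + j*(p*b₀) ∈ kFoldN C (j*p) := by
  intro j
  induction j with
  | zero =>
    intro x hx
    rw [kFoldN_zero] at hx
    rw [Set.mem_singleton_iff] at hx
    subst hx
    have : (0:ℕ) ∈ kFoldN C 0 := by rw [kFoldN_zero]; simp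
    simpa using this
  | succ j ih =>
    intro x hx
    obtain ⟨y, hy, y', hy', rfl⟩ := mem_kFoldN_succ.1 hx
    have h1 : y + p*b₀ ∈ kFoldN C p := hy
    have h2 := ih y' hy'
    have h3 := add_mem_kFoldN h1 h2
    have hval : y + p*b₀ + (y' + j*(p*b₀)) = y + y' + (j+1)*(p*b₀) := by ring
    have hidx : p + j*p = (j+1)*p := by ring
    rw [hval, hidx] at h3
    exact h3

section Main

attribute [local instance] Classical.propDecidable

set_option maxHeartbeats 1000000 in
lemma main_ap {B : Set ℕ} (hB : lowerDensity B ≠ 0) :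
    ∃ a D M : ℕ, 1 ≤ D ∧ 1 ≤ M ∧
      ∀ i : ℕ, ∃ k, 1 ≤ k ∧ k ≤ M ∧ (a + i * D) ∈ kFoldN B k := by
  obtain ⟨β, hβ, N₀, hcnt⟩ := exists_density_of_ne_zero hB
  -- two elements of B
  obtain ⟨b₀, b₁, hb₀B, hb₁B, hb₀1, hlt⟩ :
      ∃ b₀ b₁ : ℕ, b₀ ∈ B ∧ b₁ ∈ B ∧ 1 ≤ b₀ ∧ b₀ < b₁ := by
    set m₁ := max N₀ ⌈2/β⌉₊ with hm₁
    have hc2 : 2 ≤ cnt B m₁ := by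
      have h1 : (2:ℝ)/β ≤ ⌈2/β⌉₊ := Nat.le_ceil _
      have h2 : (⌈2/β⌉₊ : ℝ) ≤ m₁ := by
        have : ⌈2/β⌉₊ ≤ m₁ := le_max_right _ _
        exact_mod_cast this
      have h3 := hcnt m₁ (le_max_left _ _)
      have : (2:ℝ) ≤ cnt B m₁ := by
        have hb : (2:ℝ) ≤ β * m₁ := by
          rw [div_le_iff₀ hβ] at h1
          nlinarith
        linarith
      exact_mod_cast this
    have hcard : 1 < ((Finset.Icc 1 m₁).filter (· ∈ B)).card := by
      have : cnt B m₁ = ((Finset.Icc 1 m₁).filter (· ∈ B)).card := rfl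
      omega
    obtain ⟨x, hx, y, hy, hxy⟩ := Finset.one_lt_card.1 hcard
    have hx' := Finset.mem_filter.1 hx
    have hy' := Finset.mem_filter.1 hy
    have hxI := Finset.mem_Icc.1 hx'.1
    have hyI := Finset.mem_Icc.1 hy'.1
    rcases Nat.lt_or_ge x y with h | h
    · exact ⟨x, y, hx'.2, hy'.2, by omega, h⟩
    · exact ⟨y, x, hy'.2, hx'.2, by omega, by omega⟩
  set D := b₁ - b₀ with hD
  have hD1 : 1 ≤ D := by omega
  set C : Set ℕ := {t : ℕ | ∃ k, 1 ≤ k ∧ k ≤ D ∧ D*t ∈ kFoldN B k} with hC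
  have hb₀C : b₀ ∈ C := ⟨D, hD1, le_refl D, by
    have := const_mem_kFoldN hb₀B D
    exact this⟩
  have hb₀1C : b₀ + 1 ∈ C := by
    refine ⟨D, hD1, le_refl D, ?_⟩
    have h1 := const_mem_kFoldN hb₀B (D-1)
    have h2 := mem_kFoldN_one.2 hb₁B
    have h3 := add_mem_kFoldN h1 h2
    have hidx : D - 1 + 1 = D := by omega
    have hval : (D-1)*b₀ + b₁ = D*(b₀+1) := by
      have e1 : (D-1)*b₀ + b₀ = D*b₀ := by
        have : (D-1) + 1 = D := by omega
        calc (D-1)*b₀ + b₀ = ((D-1)+1)*b₀ := by ring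
        _ = D*b₀ := by rw [this]
      have e2 : D*(b₀+1) = D*b₀ + D := by ring
      omega
    rw [hidx, hval] at h3
    exact h3
  -- density of C
  have hCd : ∀ m : ℕ, N₀ ≤ m → 1 ≤ m → β/D * m ≤ (cnt C m : ℝ) := by
    intro m hm hm1
    set G := (Finset.Icc 1 m).filter (· ∈ B) with hG
    have hGcard : β * m ≤ (G.card : ℝ) := hcnt m hm
    -- pigeonhole over residues
    have hfibsum : ∑ s ∈ Finset.range D, (G.filter (fun b => b % D = s)).card = G.card := by
      rw [← Finset.card_eq_sum_card_fiberwise]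
      intro b hb
      exact Finset.mem_range.2 (Nat.mod_lt b (by omega))
    have hG1 : 1 ≤ G.card := by
      have : (0:ℝ) < β * m := by
        have : (1:ℝ) ≤ m := by exact_mod_cast hm1
        nlinarith
      have : (0:ℝ) < G.card := lt_of_lt_of_le this hGcard
      exact_mod_cast this
    obtain ⟨s, hs, hfib⟩ : ∃ s ∈ Finset.range D,
        G.card ≤ D * (G.filter (fun b => b % D = s)).card := by
      by_contra hcon
      push_neg at hcon
      have hsum2 : D * G.card = ∑ s ∈ Finset.range D, D * (G.filter (fun b => b % D = s)).card := by
        rw [← Finset.mul_sum, hfibsum]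
      have hbound : ∑ s ∈ Finset.range D, D * (G.filter (fun b => b % D = s)).card
          ≤ ∑ _s ∈ Finset.range D, (G.card - 1) := by
        apply Finset.sum_le_sum
        intro s hs'
        have := hcon s hs'
        omega
      rw [Finset.sum_const, Finset.card_range, smul_eq_mul] at hbound
      have h9 : D * G.card ≤ D * (G.card - 1) := by rw [hsum2]; exact hbound
      have hlt : D * (G.card - 1) < D * G.card :=
        mul_lt_mul_of_pos_left (by omega) (by omega)
      omega
    set F := G.filter (fun b => b % D = s) with hF
    have hFne : F.Nonempty := by
      rw [← Finset.card_pos]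
      rcases Nat.eq_zero_or_pos F.card with h0 | h
      · rw [h0, Nat.mul_zero] at hfib
        omega
      · exact h
    set w := F.min' hFne with hw
    have hwF : w ∈ F := F.min'_mem hFne
    have hwG := Finset.mem_filter.1 ((Finset.filter_subset _ _) hwF)
    have hwB : w ∈ B := (Finset.mem_filter.1 hwF).1 |> Finset.mem_filter.1 |>.2
    have hwI := Finset.mem_Icc.1 (Finset.mem_filter.1 ((Finset.filter_subset _ _) hwF)).1
    have hws : w % D = s := (Finset.mem_filter.1 hwF).2
    have hwmin : ∀ b ∈ F, w ≤ b := fun b hb => F.min'_le b hb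
    -- injection F → C ∩ [1,m]
    have hinj : F.card ≤ cnt C m := by
      rw [cnt]
      apply Finset.card_le_card_of_injOn (fun b => w + (b - w)/D)
      · intro b hb
        have hbG := Finset.mem_filter.1 hb
        have hbB := (Finset.mem_filter.1 hbG.1).2
        have hbI := Finset.mem_Icc.1 (Finset.mem_filter.1 hbG.1).1
        have hbs : b % D = s := hbG.2
        have hwb : w ≤ b := hwmin b hb
        have hdvd : D ∣ (b - w) := by
          have : w ≡ b [MOD D] := by
            unfold Nat.ModEq
            rw [hws, hbs]
          exact (Nat.modEq_iff_dvd' hwb).1 this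
        obtain ⟨e, he⟩ := hdvd
        have hdiv : (b - w)/D = e := by
          rw [he]
          exact Nat.mul_div_cancel_left e (by omega)
        have hDt : D * (w + (b - w)/D) = (D-1)*w + b := by
          rw [hdiv]
          have h1 : D*e = b - w := he.symm
          have h2 : (D-1)*w + w = D*w := by
            calc (D-1)*w + w = ((D-1)+1)*w := by ring
            _ = D*w := by rw [show D-1+1 = D by omega]
          have h3 : D*(w+e) = D*w + D*e := by ring
          omega
        have hmem : D * (w + (b - w)/D) ∈ kFoldN B D := by
          rw [hDt]
          have h1 := const_mem_kFoldN hwB (D-1)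
          have h2 := mem_kFoldN_one.2 hbB
          have h3 := add_mem_kFoldN h1 h2
          rw [show D-1+1 = D by omega] at h3
          exact h3
        have htC : (w + (b - w)/D) ∈ C := ⟨D, hD1, le_refl D, hmem⟩
        have htle : w + (b - w)/D ≤ m := by
          have h4 : D * (w + (b - w)/D) ≤ D * m := by
            rw [hDt]
            have : (D-1)*w ≤ (D-1)*m := Nat.mul_le_mul_left _ (by omega)
            have h5 : (D-1)*m + m = D*m := by
              calc (D-1)*m + m = ((D-1)+1)*m := by ring
              _ = D*m := by rw [show D-1+1 = D by omega]
            omega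
          exact Nat.le_of_mul_le_mul_left h4 (by omega)
        simp only [Finset.mem_coe, Finset.mem_filter, Finset.mem_Icc]
        exact ⟨⟨by omega, htle⟩, htC⟩
      · intro b₁ h₁ b₂ h₂ he
        have hw₁ : w ≤ b₁ := hwmin b₁ h₁
        have hw₂ : w ≤ b₂ := hwmin b₂ h₂
        have hs₁ : b₁ % D = s := (Finset.mem_filter.1 h₁).2
        have hs₂ : b₂ % D = s := (Finset.mem_filter.1 h₂).2
        have hd₁ : D ∣ (b₁ - w) := (Nat.modEq_iff_dvd' hw₁).1 (by unfold Nat.ModEq; rw [hws, hs₁])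
        have hd₂ : D ∣ (b₂ - w) := (Nat.modEq_iff_dvd' hw₂).1 (by unfold Nat.ModEq; rw [hws, hs₂])
        have he' : (b₁ - w)/D = (b₂ - w)/D := by
          have : w + (b₁ - w)/D = w + (b₂ - w)/D := he
          omega
        have e₁ := Nat.div_mul_cancel hd₁
        have e₂ := Nat.div_mul_cancel hd₂
        rw [he'] at e₁
        omega
    -- conclude
    have hchain : β * m ≤ (D:ℝ) * cnt C m := by
      have h1 : (G.card : ℝ) ≤ (D:ℝ) * F.card := by exact_mod_cast hfib
      have h2 : (F.card : ℝ) ≤ cnt C m := by exact_mod_cast hinj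
      have hD0 : (0:ℝ) ≤ D := by positivity
      nlinarith
    have hD0 : (0:ℝ) < D := by exact_mod_cast hD1
    rw [div_mul_eq_mul_div, div_le_iff₀ hD0]
    nlinarith
  -- choose p
  set p := max (max N₀ 1) ⌈2*D*b₀/β⌉₊ + 1 with hp
  have hp1 : 1 ≤ p := by omega
  have hpN₀ : N₀ ≤ p := le_trans (le_max_left N₀ 1) (le_trans (le_max_left _ _) (Nat.le_succ _))
  have hpceil : (2*(D:ℝ)*b₀/β) ≤ p := by
    have h1 : (2*(D:ℝ)*b₀/β) ≤ ⌈2*(D:ℝ)*b₀/β⌉₊ := Nat.le_ceil _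
    have h2 : (⌈2*(D:ℝ)*b₀/β⌉₊ : ℝ) ≤ p := by
      have h3 : ⌈2*(D:ℝ)*b₀/β⌉₊ ≤ p := by
        rw [hp]
        have hcast : (2*(D:ℝ)*b₀/β) = ((2*D*b₀ : ℕ) : ℝ)/β := by push_cast; ring
        rw [hcast]
        exact le_trans (le_max_right _ _) (Nat.le_succ _)
      exact_mod_cast h3
    linarith
  set X : Set ℕ := {y : ℕ | y + p*b₀ ∈ kFoldN C p} with hX
  have h0X : (0:ℕ) ∈ X := by
    show 0 + p*b₀ ∈ kFoldN C p
    rw [Nat.zero_add]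
    exact const_mem_kFoldN hb₀C p
  have hIntX : ∀ y : ℕ, y ≤ p → y ∈ X := by
    intro y hy
    show y + p*b₀ ∈ kFoldN C p
    have h1 := const_mem_kFoldN hb₀1C y
    have h2 := const_mem_kFoldN hb₀C (p-y)
    have h3 := add_mem_kFoldN h1 h2
    rw [show y + (p-y) = p by omega] at h3
    have hval : y*(b₀+1) + (p-y)*b₀ = y + p*b₀ := by
      have e1 : y*(b₀+1) = y*b₀ + y := by ring
      have e2 : (p-y)*b₀ + y*b₀ = p*b₀ := by
        calc (p-y)*b₀ + y*b₀ = ((p-y)+y)*b₀ := by ring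
        _ = p*b₀ := by rw [Nat.sub_add_cancel hy]
      omega
    rw [hval] at h3
    exact h3
  have h1X : (1:ℕ) ∈ X := hIntX 1 hp1
  set σ₀ : ℝ := min (β/(2*D)) 1 with hσ₀
  have hD0 : (0:ℝ) < D := by exact_mod_cast hD1
  have hσ₀pos : 0 < σ₀ := lt_min (by positivity) one_pos
  have hσ₀le : σ₀ ≤ 1 := min_le_right _ _
  have hσ₀le2 : σ₀ ≤ β/(2*D) := min_le_left _ _
  have hXcnt : ∀ m : ℕ, 1 ≤ m → σ₀ * m ≤ (cnt X m : ℝ) := by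
    intro m hm
    have hm0 : (0:ℝ) ≤ m := by positivity
    rcases le_or_gt m p with hmp | hmp
    · have hfull : cnt X m = m := by
        rw [cnt]
        have hfil : (Finset.Icc 1 m).filter (· ∈ X) = Finset.Icc 1 m := by
          apply Finset.filter_true_of_mem
          intro t ht
          exact hIntX t (le_trans (Finset.mem_Icc.1 ht).2 hmp)
        rw [hfil, Nat.card_Icc]
        omega
      rw [hfull]
      nlinarith
    · -- m > p
      have hsrc : cnt C (m + b₀) ≤ ((Finset.Icc (b₀+1) (m+b₀)).filter (· ∈ C)).card + b₀ := by
        have hsplit2 : Finset.Icc 1 (m+b₀) = Finset.Icc 1 b₀ ∪ Finset.Icc (b₀+1) (m+b₀) := by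
          ext t
          simp only [Finset.mem_Icc, Finset.mem_union]
          omega
        rw [cnt, hsplit2, Finset.filter_union]
        calc ((Finset.Icc 1 b₀).filter (· ∈ C) ∪ (Finset.Icc (b₀+1) (m+b₀)).filter (· ∈ C)).card
            ≤ ((Finset.Icc 1 b₀).filter (· ∈ C)).card
              + ((Finset.Icc (b₀+1) (m+b₀)).filter (· ∈ C)).card := Finset.card_union_le _ _
        _ ≤ ((Finset.Icc (b₀+1) (m+b₀)).filter (· ∈ C)).card + b₀ := by
            have : ((Finset.Icc 1 b₀).filter (· ∈ C)).card ≤ b₀ := by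
              calc ((Finset.Icc 1 b₀).filter (· ∈ C)).card ≤ (Finset.Icc 1 b₀).card :=
                Finset.card_filter_le _ _
              _ = b₀ := by rw [Nat.card_Icc]; omega
            omega
      have hinj2 : ((Finset.Icc (b₀+1) (m+b₀)).filter (· ∈ C)).card ≤ cnt X m := by
        rw [cnt]
        apply Finset.card_le_card_of_injOn (fun c => c - b₀)
        · intro c hc
          have hc' := Finset.mem_filter.1 hc
          have hcI := Finset.mem_Icc.1 hc'.1
          have hmem : (c - b₀) + p*b₀ ∈ kFoldN C p := by
            have h1 := mem_kFoldN_one.2 hc'.2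
            have h2 := const_mem_kFoldN hb₀C (p-1)
            have h3 := add_mem_kFoldN h1 h2
            rw [show 1 + (p-1) = p by omega] at h3
            have hval : c + (p-1)*b₀ = (c - b₀) + p*b₀ := by
              have e2 : (p-1)*b₀ + 1*b₀ = p*b₀ := by
                calc (p-1)*b₀ + 1*b₀ = ((p-1)+1)*b₀ := by ring
                _ = p*b₀ := by rw [show p-1+1 = p by omega]
              have e3 : 1*b₀ = b₀ := one_mul b₀
              omega
            rw [hval] at h3
            exact h3
          simp only [Finset.mem_coe, Finset.mem_filter, Finset.mem_Icc]
          exact ⟨⟨by omega, by omega⟩, hmem⟩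
        · intro c₁ h₁ c₂ h₂ he
          have i₁ := Finset.mem_Icc.1 (Finset.mem_filter.1 h₁).1
          have i₂ := Finset.mem_Icc.1 (Finset.mem_filter.1 h₂).1
          have he' : c₁ - b₀ = c₂ - b₀ := he
          omega
      have hCm : β/D * ((m + b₀ : ℕ) : ℝ) ≤ (cnt C (m+b₀) : ℝ) :=
        hCd (m+b₀) (by omega) (by omega)
      have hcast : ((m + b₀ : ℕ) : ℝ) = (m:ℝ) + b₀ := by push_cast; ring
      rw [hcast] at hCm
      have hsrcR : (cnt C (m+b₀) : ℝ) ≤ ((Finset.Icc (b₀+1) (m+b₀)).filter (· ∈ C)).card + b₀ := by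
        exact_mod_cast hsrc
      have hinj2R : (((Finset.Icc (b₀+1) (m+b₀)).filter (· ∈ C)).card : ℝ) ≤ cnt X m := by
        exact_mod_cast hinj2
      -- m ≥ p ≥ 2*D*b₀/β  ⇒  β/(2D) * m ≥ b₀
      have hmbig : (b₀ : ℝ) ≤ β/(2*D) * m := by
        have hpm : ((p:ℕ):ℝ) ≤ m := by exact_mod_cast le_of_lt hmp
        have h6 : (2*(D:ℝ)*b₀/β) ≤ m := le_trans hpceil hpm
        rw [div_le_iff₀ hβ] at h6
        rw [div_mul_eq_mul_div, le_div_iff₀ (by positivity)]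
        nlinarith
      have hchain2 : σ₀ * m ≤ β/D * ((m:ℝ) + b₀) - b₀ := by
        have h7 : σ₀ * m ≤ β/(2*D) * m := mul_le_mul_of_nonneg_right hσ₀le2 hm0
        have e4 : β/D * m - β/(2*D) * m = β/(2*D) * m := by
          field_simp
          ring
        have e5 : (0:ℝ) ≤ β/D * b₀ := by positivity
        have e6 : β/D * ((m:ℝ)+b₀) = β/D*m + β/D*b₀ := by ring
        linarith [hmbig]
      linarith [hchain2, hCm, hsrcR, hinj2R]
  obtain ⟨h, hh1, hbasis⟩ := schnirelmann_basis h0X h1X hσ₀pos hσ₀le hXcnt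
  have hhp : 1 ≤ h*p := by
    have := Nat.mul_le_mul hh1 hp1
    omega
  refine ⟨D*(1 + h*(p*b₀)), D, h*p*D, hD1, ?_, ?_⟩
  · have := Nat.mul_le_mul hhp hD1
    omega
  intro i
  have hzX : (1+i) ∈ kFoldN X h := hbasis (1+i) (by omega)
  have h4 : (1+i) + h*(p*b₀) ∈ kFoldN C (h*p) := kFoldN_X_comp h (1+i) hzX
  obtain ⟨k, hk1, hk2, hk3⟩ := kFoldN_scaled_comp (h*p) ((1+i) + h*(p*b₀)) h4
  refine ⟨k, by omega, by omega, ?_⟩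
  have hval : D*((1+i) + h*(p*b₀)) = D*(1 + h*(p*b₀)) + i*D := by ring
  rw [hval] at hk3
  exact hk3

end Main

/-- For `A ⊆ ℕ`, `A` is `δ̲`-sparse iff no `Σ_n(A)` contains an infinite
arithmetic progression `{a + i·d : i ∈ ℕ}` with `d ≥ 1`. -/
theorem lowerDensity_sparse_iff_no_infinite_ap (A : Set ℕ) :
    (∀ n : ℕ, 1 ≤ n → lowerDensity (sigmaSumN n A) = 0) ↔
      ∀ n : ℕ, 1 ≤ n →
        ¬ ∃ a d : ℕ, 1 ≤ d ∧ ∀ i : ℕ, a + i * d ∈ sigmaSumN n A := by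
  constructor
  · intro hdens n hn
    rintro ⟨a, d, hd, hap⟩
    exact lowerDensity_ne_zero_of_ap hd hap (hdens n hn)
  · intro hap n hn
    by_contra hne
    obtain ⟨a, D, M, hD1, hM1, hmem⟩ := main_ap hne
    apply hap (M*n) (by have := Nat.mul_le_mul hM1 hn; omega)
    refine ⟨a, D, hD1, ?_⟩
    intro i
    obtain ⟨k, hk1, hkM, hkmem⟩ := hmem i
    obtain ⟨j, hjk, hjkn, hjmem⟩ := kFoldN_sigma_comp k _ hkmem
    refine mem_sigmaSumN.2 ⟨j, by omega, ?_, hjmem⟩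
    have := Nat.mul_le_mul hkM (le_refl n)
    omega
end

section
/- Let A = {2ⁿ + n : n ∈ ℕ} ⊆ ℤ. Then Σ_3(±A) = ℤ; that is, every integer is a sum of at most three elements of ±A = {x ∈ ℤ : |x| ∈ A}. In particular, A is not sufficiently sparse. -/
open Filter Pointwise

/-! The identity `(2^(n+1) + (n+1)) - 2 (2^n + n) = 1 - n` writes every integer `≤ 1` as a sum of
three elements of `±A`; since `±A = -(±A)`, so is every integer `≥ -1`. A set whose `Σ_3` is all
of `ℤ` has lower density `1`, not `0`. -/

lemma neg_mem_pmSet {A : Set ℤ} {x : ℤ} (hx : x ∈ pmSet A) : -x ∈ pmSet A := by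
  simpa [pmSet] using hx

lemma mem_pmSet_of_mem {A : Set ℤ} {x : ℤ} (hx : x ∈ A) (hx₀ : 0 ≤ x) : x ∈ pmSet A := by
  simpa [pmSet, abs_of_nonneg hx₀] using hx

lemma add_add_mem_kFold_three {X : Set ℤ} {a b c : ℤ} (ha : a ∈ X) (hb : b ∈ X) (hc : c ∈ X) :
    a + b + c ∈ kFold X 3 := by
  refine ⟨![a, b, c], fun i => ?_, by simp [Fin.sum_univ_three]⟩
  fin_cases i <;> assumption

lemma neg_mem_kFold {X : Set ℤ} (hX : ∀ x ∈ X, -x ∈ X) {k : ℕ} {z : ℤ} (hz : z ∈ kFold X k) :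
    -z ∈ kFold X k := by
  obtain ⟨f, hf, rfl⟩ := hz
  exact ⟨fun i => -f i, fun i => hX _ (hf i), by simp⟩

lemma kFold_subset_sigmaSum {X : Set ℤ} {k n : ℕ} (hk : 1 ≤ k) (hkn : k ≤ n) :
    kFold X k ⊆ sigmaSum n X :=
  Set.subset_biUnion_of_mem (u := kFold X) (Finset.mem_coe.2 (Finset.mem_Icc.2 ⟨hk, hkn⟩))

lemma pow_add_self_mem_pmSet (n : ℕ) :
    (2 ^ n + n : ℤ) ∈ pmSet {x : ℤ | ∃ n : ℕ, x = 2 ^ n + n} :=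
  mem_pmSet_of_mem ⟨n, rfl⟩ (by positivity)

lemma one_sub_mem_kFold_three (n : ℕ) :
    (1 - n : ℤ) ∈ kFold (pmSet {x : ℤ | ∃ n : ℕ, x = 2 ^ n + n}) 3 := by
  have key : (1 - n : ℤ) = (2 ^ (n + 1) + (n + 1 : ℕ)) + -(2 ^ n + n) + -(2 ^ n + n) := by
    push_cast; ring
  rw [key]
  exact add_add_mem_kFold_three (pow_add_self_mem_pmSet _)
    (neg_mem_pmSet (pow_add_self_mem_pmSet n)) (neg_mem_pmSet (pow_add_self_mem_pmSet n))

lemma kFold_three_pmSet_pow_add_self_eq_univ :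
    kFold (pmSet {x : ℤ | ∃ n : ℕ, x = 2 ^ n + n}) 3 = Set.univ := by
  refine Set.eq_univ_of_forall fun m => ?_
  have of_le_one : ∀ m : ℤ, m ≤ 1 → m ∈ kFold (pmSet {x : ℤ | ∃ n : ℕ, x = 2 ^ n + n}) 3 :=
    fun m hm => by
      simpa [Int.toNat_of_nonneg (sub_nonneg.2 hm)] using one_sub_mem_kFold_three (1 - m).toNat
  rcases le_total m 1 with hm | hm
  · exact of_le_one m hm
  · simpa using neg_mem_kFold (fun _ => neg_mem_pmSet) (of_le_one (-m) (by omega))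

lemma lowerDensity_univ : lowerDensity Set.univ = 1 := by
  refine Tendsto.liminf_eq (tendsto_const_nhds.congr' ?_)
  filter_upwards [eventually_ge_atTop 1] with n hn
  rw [Set.univ_inter, ← Finset.coe_Icc, Set.ncard_coe_finset, Nat.card_Icc, Nat.add_sub_cancel,
    div_self (Nat.cast_ne_zero.2 (by omega))]

lemma not_suffSparse_of_sigmaSum_pmSet_eq_univ {A : Set ℤ} {n : ℕ} (hn : 1 ≤ n)
    (h : sigmaSum n (pmSet A) = Set.univ) : ¬ SuffSparse A := fun hA => by
  have hdens := hA n hn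
  rw [h, show intSetToNat Set.univ = Set.univ from rfl, lowerDensity_univ] at hdens
  exact one_ne_zero hdens

/-- For `A = {2ⁿ + n : n ∈ ℕ}`, we have `Σ_3(±A) = ℤ`, so every integer is a
sum of at most three elements of `±A`; in particular `A` is not sufficiently sparse. -/
theorem sigma_three_pm_pow_add_eq_univ :
    sigmaSum 3 (pmSet {x : ℤ | ∃ n : ℕ, x = 2 ^ n + n}) = Set.univ ∧
      ¬ SuffSparse {x : ℤ | ∃ n : ℕ, x = 2 ^ n + n} := by
  have h : sigmaSum 3 (pmSet {x : ℤ | ∃ n : ℕ, x = 2 ^ n + n}) = Set.univ :=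
    Set.eq_univ_of_univ_subset <| kFold_three_pmSet_pow_add_self_eq_univ ▸
      kFold_subset_sigmaSum (by norm_num) le_rfl
  exact ⟨h, not_suffSparse_of_sigmaSum_pmSet_eq_univ (by norm_num) h⟩
end
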